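/- arXiv:1909.13658 — 3 statements merged into one kernel-verified Lean document; each statement's English description precedes it below -/
import Mathlib

section
/- Let f_∞ be a probability density on an interval I ⊆ ℝ satisfying d/dx(λ(x) f_∞(x)) + (x - M) f_∞(x) = 0 on I, with λ(x) ≥ 0 and constant M ≥ 0. Then for any smooth function φ on I such that φ(X) has finite variance, where X has density f_∞, Var[φ(X)] ≤ E[λ(X) (φ'(X))²]. -/
open MeasureTheory Set
open scoped ENNReal


private lemma exhaust_above (I : Set ℝ) (hI : I.OrdConnected) {t : ℝ} (ht : t ∈ I) :
    ∃ u : ℕ → ℝ, Monotone u ∧ (∀ n, u n ∈ I) ∧ (⋃ n, Ioc t (u n)) = I ∩ Ioi t := by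
  by_cases hne : (I ∩ Ioi t).Nonempty
  · obtain ⟨x0, hx0I, hx0t⟩ := hne
    by_cases hbdd : BddAbove I
    · set s := sSup I with hs
      have hx0s : x0 ≤ s := le_csSup hbdd hx0I
      have hts : t < s := lt_of_lt_of_le hx0t hx0s
      by_cases hsI : s ∈ I
      · refine ⟨fun _ => s, monotone_const, fun _ => hsI, ?_⟩
        rw [Set.iUnion_const]
        ext z
        simp only [mem_Ioc, mem_inter_iff, mem_Ioi]
        constructor
        · rintro ⟨h1, h2⟩
          exact ⟨hI.out ht hsI ⟨le_of_lt h1, h2⟩, h1⟩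
        · rintro ⟨h1, h2⟩
          exact ⟨h2, le_csSup hbdd h1⟩
      · have key : I ∩ Ioi t = Ioo t s := by
          ext z
          simp only [mem_inter_iff, mem_Ioi, mem_Ioo]
          constructor
          · rintro ⟨h1, h2⟩
            refine ⟨h2, lt_of_le_of_ne (le_csSup hbdd h1) ?_⟩
            rintro rfl; exact hsI h1
          · rintro ⟨h1, h2⟩
            obtain ⟨y, hyI, hzy⟩ := exists_lt_of_lt_csSup ⟨t, ht⟩ h2
            exact ⟨hI.out ht hyI ⟨le_of_lt h1, le_of_lt hzy⟩, h1⟩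
        have hst : 0 < s - t := by linarith
        refine ⟨fun n => s - (s - t)/(n+2), ?_, ?_, ?_⟩
        · intro m n hmn
          have : (0:ℝ) < m + 2 := by positivity
          have h2 : (0:ℝ) < n + 2 := by positivity
          have : (s - t)/(n+2) ≤ (s - t)/(m+2) := by
            apply div_le_div_of_nonneg_left (le_of_lt hst) this
            linarith [(Nat.cast_le (α := ℝ)).mpr hmn]
          linarith
        · intro n
          have h2 : (0:ℝ) < n + 2 := by positivity
          have hlt : (s - t)/(n+2) < s - t := by
            rw [div_lt_iff₀ h2]
            nlinarith
          have hpos : 0 < (s - t)/(n+2) := by positivity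
          have : s - (s - t)/(n+2) ∈ Ioo t s := by
            constructor <;> [linarith; linarith]
          have hIoo : Ioo t s ⊆ I := by rw [← key]; exact inter_subset_left
          exact hIoo this
        · rw [key]
          ext z
          simp only [mem_iUnion, mem_Ioc, mem_Ioo]
          constructor
          · rintro ⟨n, h1, h2⟩
            have h2' : (0:ℝ) < n + 2 := by positivity
            have hpos : 0 < (s - t)/(n+2) := by positivity
            exact ⟨h1, by linarith⟩
          · rintro ⟨h1, h2⟩
            obtain ⟨n, hn⟩ := exists_nat_ge ((s - t)/(s - z))
            have hsz : 0 < s - z := by linarith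
            refine ⟨n, h1, ?_⟩
            have h2' : (0:ℝ) < n + 2 := by positivity
            have : (s - t)/(n+2) ≤ s - z := by
              rw [div_le_iff₀ h2']
              have : (s - t)/(s - z) ≤ n + 2 := by linarith
              rw [div_le_iff₀ hsz] at this
              nlinarith
            linarith
    · have key : I ∩ Ioi t = Ioi t := by
        ext z
        simp only [mem_inter_iff, mem_Ioi, and_iff_right_iff_imp]
        intro hz
        obtain ⟨y, hyI, hzy⟩ := not_bddAbove_iff.mp hbdd z
        exact hI.out ht hyI ⟨le_of_lt hz, le_of_lt hzy⟩
      have hIoi : Ioi t ⊆ I := by rw [← key]; exact inter_subset_left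
      refine ⟨fun n => t + n + 1, ?_, ?_, ?_⟩
      · intro m n hmn
        have : (m : ℝ) ≤ n := Nat.cast_le.mpr hmn
        simp only []
        linarith
      · intro n
        apply hIoi
        simp only [mem_Ioi]
        have : (0:ℝ) ≤ n := Nat.cast_nonneg n
        linarith
      · rw [key]
        ext z
        simp only [mem_iUnion, mem_Ioc, mem_Ioi]
        constructor
        · rintro ⟨n, h1, _⟩; exact h1
        · intro h1
          obtain ⟨n, hn⟩ := exists_nat_ge (z - t)
          exact ⟨n, h1, by linarith⟩
  · refine ⟨fun _ => t, monotone_const, fun _ => ht, ?_⟩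
    rw [Set.iUnion_const, Ioc_self, not_nonempty_iff_eq_empty.mp hne]


private lemma exhaust_below (I : Set ℝ) (hI : I.OrdConnected) {t : ℝ} (ht : t ∈ I) :
    ∃ u : ℕ → ℝ, Antitone u ∧ (∀ n, u n ∈ I) ∧ (⋃ n, Ico (u n) t) = I ∩ Iio t := by
  have hI' : (Neg.neg ⁻¹' I : Set ℝ).OrdConnected := by
    constructor
    intro a ha b hb z hz
    simp only [mem_preimage] at *
    exact hI.out hb ha ⟨neg_le_neg hz.2, neg_le_neg hz.1⟩
  obtain ⟨u, hmon, huI, hcov⟩ := exhaust_above _ hI' (show -t ∈ Neg.neg ⁻¹' I by simpa)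
  refine ⟨fun n => -u n, fun m n h => neg_le_neg (hmon h), fun n => by simpa using huI n, ?_⟩
  ext z
  have : z ∈ (⋃ n, Ico (-u n) t) ↔ -z ∈ (⋃ n, Ioc (-t) (u n)) := by
    simp only [mem_iUnion, mem_Ico, mem_Ioc]
    constructor
    · rintro ⟨n, h1, h2⟩; exact ⟨n, by linarith, by linarith⟩
    · rintro ⟨n, h1, h2⟩; exact ⟨n, by linarith, by linarith⟩
  rw [this, hcov]
  simp only [mem_inter_iff, mem_preimage, neg_neg, mem_Ioi, mem_Iio]
  constructor
  · rintro ⟨h1, h2⟩; exact ⟨h1, by linarith⟩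
  · rintro ⟨h1, h2⟩; exact ⟨h1, by linarith⟩

private lemma cs_aux {ψ : ℝ → ℝ} (hc : Continuous ψ) {y x : ℝ} (hyx : y ≤ x) :
    (∫ t in Ioc y x, ψ t) ^ 2 ≤ (x - y) * ∫ t in Ioc y x, ψ t ^ 2 := by
  set μ' := volume.restrict (Ioc y x) with hμ'
  haveI : IsFiniteMeasure μ' := by
    constructor
    rw [hμ', Measure.restrict_apply_univ, Real.volume_Ioc]
    exact ENNReal.ofReal_lt_top
  obtain ⟨C, hC⟩ : ∃ C, ∀ z ∈ Icc y x, ‖ψ z‖ ≤ C :=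
    (isCompact_Icc).exists_bound_of_continuousOn hc.continuousOn
  have hmem2 : MemLp (fun z => |ψ z|) (ENNReal.ofReal 2) μ' := by
    apply MemLp.of_bound (hc.abs.aestronglyMeasurable) (max C 0)
    apply (ae_restrict_iff' measurableSet_Ioc).mpr
    apply ae_of_all
    intro z hz
    simp only [norm_abs_eq_norm]
    exact le_max_of_le_left (hC z ⟨le_of_lt hz.1, hz.2⟩)
  have hmem1 : MemLp (fun _ : ℝ => (1:ℝ)) (ENNReal.ofReal 2) μ' := memLp_const 1
  have hconj : Real.HolderConjugate 2 2 := Real.HolderConjugate.two_two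
  have hpow2 : ∀ a : ℝ, a ^ (2:ℝ) = a ^ (2:ℕ) := fun a => by
    rw [← Real.rpow_natCast a 2]; norm_num
  have hh := MeasureTheory.integral_mul_le_Lp_mul_Lq_of_nonneg (μ := μ') hconj
    (ae_of_all _ fun z => abs_nonneg (ψ z)) (ae_of_all _ fun _ => zero_le_one) hmem2 hmem1
  simp only [mul_one, Real.one_rpow] at hh
  have habs : |∫ t in Ioc y x, ψ t| ≤ ∫ t in Ioc y x, |ψ t| := by
    simpa [Real.norm_eq_abs] using
      MeasureTheory.norm_integral_le_integral_norm (μ := μ') fun t => ψ t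
  have h1 : ∫ _ : ℝ, (1:ℝ) ∂μ' = x - y := by
    simp [hμ', Real.volume_Ioc, ENNReal.toReal_ofReal (sub_nonneg.mpr hyx), hyx]
  have h2 : ∫ z, |ψ z| ^ (2:ℝ) ∂μ' = ∫ t in Ioc y x, ψ t ^ 2 := by
    apply integral_congr_ae
    apply ae_of_all
    intro z
    simp only [hpow2, sq_abs]
  have hA0 : 0 ≤ ∫ z, |ψ z| ^ (2:ℝ) ∂μ' :=
    integral_nonneg fun z => Real.rpow_nonneg (abs_nonneg _) _
  have hB0 : (0:ℝ) ≤ x - y := sub_nonneg.mpr hyx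
  have hsq : (∫ t in Ioc y x, ψ t) ^ 2 ≤
      ((∫ z, |ψ z| ^ (2:ℝ) ∂μ') ^ ((1:ℝ)/2) * (∫ _ : ℝ, (1:ℝ) ∂μ') ^ ((1:ℝ)/2)) ^ 2 := by
    rw [← sq_abs]
    apply pow_le_pow_left₀ (abs_nonneg _)
    exact habs.trans hh
  have hr : ∀ a : ℝ, 0 ≤ a → ((a ^ ((1:ℝ)/2)) ^ (2:ℕ)) = a := by
    intro a ha
    rw [← Real.rpow_natCast (a ^ ((1:ℝ)/2)) 2, ← Real.rpow_mul ha]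
    norm_num
  have hexp : ((∫ z, |ψ z| ^ (2:ℝ) ∂μ') ^ ((1:ℝ)/2) * (∫ _ : ℝ, (1:ℝ) ∂μ') ^ ((1:ℝ)/2)) ^ 2
      = (∫ z, |ψ z| ^ (2:ℝ) ∂μ') * (∫ _ : ℝ, (1:ℝ) ∂μ') := by
    rw [mul_pow, hr _ hA0, hr _ (h1 ▸ hB0)]
  calc (∫ t in Ioc y x, ψ t) ^ 2
      ≤ ((∫ z, |ψ z| ^ (2:ℝ) ∂μ') ^ ((1:ℝ)/2) * (∫ _ : ℝ, (1:ℝ) ∂μ') ^ ((1:ℝ)/2)) ^ 2 := hsq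
    _ = (∫ t in Ioc y x, ψ t ^ 2) * (x - y) := by rw [hexp, h1, h2]
    _ = (x - y) * ∫ t in Ioc y x, ψ t ^ 2 := mul_comm _ _


private lemma ftc_aux (I : Set ℝ) (hI : I.OrdConnected) (f lam : ℝ → ℝ) (M : ℝ)
    (hode : ∀ x ∈ I, HasDerivAt (fun y => lam y * f y) (-((x - M) * f x)) x)
    (hfint : IntegrableOn f I)
    {t u : ℝ} (ht : t ∈ I) (hu : u ∈ I) (htu : t ≤ u) :
    IntegrableOn (fun x => (x - M) * f x) (Ioc t u) ∧
      ∫ x in Ioc t u, (x - M) * f x = lam t * f t - lam u * f u := by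
  have hsub : Icc t u ⊆ I := hI.out ht hu
  have hfint' : IntegrableOn f (Ioc t u) := hfint.mono_set (Ioc_subset_Icc_self.trans hsub)
  -- truncated multiplier
  set τ : ℝ → ℝ := fun x => max (min x u) t - M with hτ
  have hτc : Continuous τ := ((continuous_id.min continuous_const).max continuous_const).sub
    continuous_const
  have hτb : ∃ C, ∀ x, ‖τ x‖ ≤ C := by
    refine ⟨max |t - M| |u - M|, fun x => ?_⟩
    rw [Real.norm_eq_abs, abs_le]
    constructor
    · have h1 : t - M ≤ τ x := by
        simp only [hτ]
        have := le_max_right (min x u) t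
        linarith
      have : -(max |t - M| |u - M|) ≤ t - M := by
        have := neg_abs_le (t - M)
        have := le_max_left |t - M| |u - M|
        linarith
      linarith
    · have h1 : τ x ≤ u - M := by
        simp only [hτ]
        have h2 : min x u ≤ u := min_le_right x u
        have h3 : t ≤ u := htu
        have : max (min x u) t ≤ u := max_le h2 h3
        linarith
      have : u - M ≤ max |t - M| |u - M| := (le_abs_self _).trans (le_max_right _ _)
      linarith
  have hτint : IntegrableOn (fun x => τ x * f x) (Ioc t u) :=
    Integrable.bdd_mul hfint' hτc.aestronglyMeasurable.restrict (ae_of_all _ hτb.choose_spec)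
  have hint : IntegrableOn (fun x => (x - M) * f x) (Ioc t u) := by
    apply hτint.congr_fun _ measurableSet_Ioc
    intro x hx
    simp only [hτ]
    rw [min_eq_left hx.2, max_eq_left (le_of_lt hx.1)]
  constructor
  · exact hint
  · have hderiv : ∀ x ∈ uIcc t u, HasDerivAt (fun y => lam y * f y) (-((x - M) * f x)) x := by
      intro x hx
      rw [uIcc_of_le htu] at hx
      exact hode x (hsub hx)
    have hii : IntervalIntegrable (fun x => -((x - M) * f x)) volume t u := by
      rw [intervalIntegrable_iff_integrableOn_Ioc_of_le htu]
      exact hint.neg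
    have := intervalIntegral.integral_eq_sub_of_hasDerivAt hderiv hii
    rw [intervalIntegral.integral_of_le htu] at this
    have h2 : ∫ x in Ioc t u, -((x - M) * f x) = -∫ x in Ioc t u, (x - M) * f x :=
      integral_neg _
    rw [h2] at this
    linarith


private lemma key_above (I : Set ℝ) (hI : I.OrdConnected) (f lam : ℝ → ℝ) (M : ℝ)
    (hfpos : ∀ x ∈ I, 0 ≤ f x) (hlam : ∀ x ∈ I, 0 ≤ lam x)
    (hode : ∀ x ∈ I, HasDerivAt (fun y => lam y * f y) (-((x - M) * f x)) x)
    (hfint : IntegrableOn f I) (hf1le : ∫ x in I, f x ≤ 1)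
    {t : ℝ} (ht : t ∈ I) :
    IntegrableOn (fun x => (x - M) * f x) (I ∩ Ioi t) ∧
      ∫ x in I ∩ Ioi t, (x - M) * f x ≤ lam t * f t := by
  obtain ⟨u, humon, huI, hucov⟩ := exhaust_above I hI ht
  have hIocI : ∀ n, Ioc t (u n) ⊆ I := fun n z hz => hI.out ht (huI n) ⟨hz.1.le, hz.2⟩
  have hIocS : ∀ n, Ioc t (u n) ⊆ I ∩ Ioi t := fun n z hz => ⟨hIocI n hz, hz.1⟩
  have hmono : Monotone (fun n => Ioc t (u n)) := fun m n hmn => Ioc_subset_Ioc_right (humon hmn)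
  set K : ℝ := max (M - t) 0 with hKdef
  have hK0 : 0 ≤ K := le_max_right _ _
  have hKMt : M - t ≤ K := le_max_left _ _
  set h : ℝ → ℝ := fun x => (x - M) * f x + K * f x with hhdef
  have hΛt0 : 0 ≤ lam t * f t := mul_nonneg (hlam t ht) (hfpos t ht)
  have hh0 : ∀ x ∈ I ∩ Ioi t, 0 ≤ h x := by
    intro x hx
    have hfx := hfpos x hx.1
    have hxt : t < x := hx.2
    have : h x = (x - M + K) * f x := by simp only [hhdef]; ring
    rw [this]
    apply mul_nonneg _ hfx
    linarith
  have hIocint : ∀ n, IntegrableOn (fun x => (x - M) * f x) (Ioc t (u n)) := by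
    intro n
    by_cases htu : t ≤ u n
    · exact (ftc_aux I hI f lam M hode hfint ht (huI n) htu).1
    · rw [Ioc_eq_empty (fun hlt => htu hlt.le)]
      exact integrableOn_empty
  have hKfint : ∀ n, IntegrableOn (fun x => K * f x) (Ioc t (u n)) :=
    fun n => (hfint.mono_set (hIocI n)).const_mul K
  have hhint : ∀ n, IntegrableOn h (Ioc t (u n)) := fun n => (hIocint n).add (hKfint n)
  have hfae : 0 ≤ᵐ[volume.restrict I] f :=
    ae_restrict_of_forall_mem hI.measurableSet hfpos
  have hval : ∀ n, ∫ x in Ioc t (u n), (x - M) * f x ≤ lam t * f t := by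
    intro n
    by_cases htu : t ≤ u n
    · have := (ftc_aux I hI f lam M hode hfint ht (huI n) htu).2
      rw [this]
      have : 0 ≤ lam (u n) * f (u n) := mul_nonneg (hlam _ (huI n)) (hfpos _ (huI n))
      linarith
    · rw [Ioc_eq_empty (fun hlt => htu hlt.le)]
      simpa using hΛt0
  have hbound : ∀ n, ∫ x in Ioc t (u n), h x ≤ lam t * f t + K := by
    intro n
    rw [integral_add (hIocint n) (hKfint n), integral_const_mul]
    have h2 : ∫ x in Ioc t (u n), f x ≤ 1 := by
      refine le_trans (setIntegral_mono_set hfint hfae ?_) hf1le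
      exact HasSubset.Subset.eventuallyLE (hIocI n)
    have h3 : K * ∫ x in Ioc t (u n), f x ≤ K * 1 := by
      apply mul_le_mul_of_nonneg_left _ hK0
      exact h2
    have := hval n
    linarith [h3]
  -- integrability of h on S
  set S := I ∩ Ioi t with hSdef
  have hSmeas : MeasurableSet S := hI.measurableSet.inter measurableSet_Ioi
  have hfS : AEStronglyMeasurable f (volume.restrict S) :=
    (hfint.mono_set inter_subset_left).1
  have hhS : AEStronglyMeasurable h (volume.restrict S) := by
    apply AEStronglyMeasurable.add
    · exact (((continuous_id.sub continuous_const).aestronglyMeasurable).restrict).mul hfS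
    · exact hfS.const_mul K
  have hhae : 0 ≤ᵐ[volume.restrict S] h := ae_restrict_of_forall_mem hSmeas hh0
  have hlin : ∫⁻ x in S, ENNReal.ofReal (h x) ≤ ENNReal.ofReal (lam t * f t + K) := by
    rw [← hucov, setLIntegral_iUnion_of_directed _ hmono.directed_le]
    apply iSup_le
    intro n
    have hae_n : 0 ≤ᵐ[volume.restrict (Ioc t (u n))] h :=
      ae_restrict_of_forall_mem measurableSet_Ioc (fun x hx => hh0 x (hIocS n hx))
    rw [← ofReal_integral_eq_lintegral_ofReal (hhint n) hae_n]
    exact ENNReal.ofReal_le_ofReal (hbound n)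
  have hhintS : IntegrableOn h S := by
    refine ⟨hhS, ?_⟩
    rw [hasFiniteIntegral_iff_norm]
    calc ∫⁻ x in S, ENNReal.ofReal ‖h x‖
        = ∫⁻ x in S, ENNReal.ofReal (h x) := by
          apply lintegral_congr_ae
          filter_upwards [hhae] with x hx
          rw [Real.norm_of_nonneg hx]
      _ ≤ ENNReal.ofReal (lam t * f t + K) := hlin
      _ < ⊤ := ENNReal.ofReal_lt_top
  have hint : IntegrableOn (fun x => (x - M) * f x) S := by
    have := hhintS.sub ((hfint.mono_set inter_subset_left).const_mul K)
    apply this.congr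
    apply ae_of_all
    intro x
    simp only [hhdef, Pi.sub_apply]
    ring
  refine ⟨hint, ?_⟩
  have htend := tendsto_setIntegral_of_monotone (fun n => measurableSet_Ioc) hmono
    (by rw [hucov]; exact hint)
  rw [hucov] at htend
  exact le_of_tendsto htend (Filter.Eventually.of_forall hval)


private lemma key_below (I : Set ℝ) (hI : I.OrdConnected) (f lam : ℝ → ℝ) (M : ℝ)
    (hfpos : ∀ x ∈ I, 0 ≤ f x) (hlam : ∀ x ∈ I, 0 ≤ lam x)
    (hode : ∀ x ∈ I, HasDerivAt (fun y => lam y * f y) (-((x - M) * f x)) x)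
    (hfint : IntegrableOn f I) (hf1le : ∫ x in I, f x ≤ 1)
    {t : ℝ} (ht : t ∈ I) :
    IntegrableOn (fun x => (M - x) * f x) (I ∩ Iio t) ∧
      ∫ x in I ∩ Iio t, (M - x) * f x ≤ lam t * f t := by
  obtain ⟨u, humon, huI, hucov⟩ := exhaust_below I hI ht
  have hIcoI : ∀ n, Ico (u n) t ⊆ I := fun n z hz => hI.out (huI n) ht ⟨hz.1, hz.2.le⟩
  have hIcoS : ∀ n, Ico (u n) t ⊆ I ∩ Iio t := fun n z hz => ⟨hIcoI n hz, hz.2⟩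
  have hmono : Monotone (fun n => Ico (u n) t) :=
    fun m n hmn => Ico_subset_Ico_left (humon hmn)
  have hrestr : ∀ n, volume.restrict (Ico (u n) t) = volume.restrict (Ioc (u n) t) :=
    fun n => Measure.restrict_congr_set Ico_ae_eq_Ioc
  set K : ℝ := max (t - M) 0 with hKdef
  have hK0 : 0 ≤ K := le_max_right _ _
  have hKMt : t - M ≤ K := le_max_left _ _
  set h : ℝ → ℝ := fun x => (M - x) * f x + K * f x with hhdef
  have hΛt0 : 0 ≤ lam t * f t := mul_nonneg (hlam t ht) (hfpos t ht)
  have hh0 : ∀ x ∈ I ∩ Iio t, 0 ≤ h x := by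
    intro x hx
    have hfx := hfpos x hx.1
    have hxt : x < t := hx.2
    have : h x = (M - x + K) * f x := by simp only [hhdef]; ring
    rw [this]
    apply mul_nonneg _ hfx
    linarith
  have hIocint : ∀ n, IntegrableOn (fun x => (M - x) * f x) (Ioc (u n) t) := by
    intro n
    by_cases htu : u n ≤ t
    · have := (ftc_aux I hI f lam M hode hfint (huI n) ht htu).1
      apply this.neg.congr
      apply ae_of_all
      intro x
      simp only [Pi.neg_apply]
      ring
    · rw [Ioc_eq_empty (fun hlt => htu hlt.le)]
      exact integrableOn_empty
  have hIcoint : ∀ n, IntegrableOn (fun x => (M - x) * f x) (Ico (u n) t) := by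
    intro n
    unfold IntegrableOn
    rw [hrestr n]
    exact hIocint n
  have hKfint : ∀ n, IntegrableOn (fun x => K * f x) (Ico (u n) t) :=
    fun n => (hfint.mono_set (hIcoI n)).const_mul K
  have hhint : ∀ n, IntegrableOn h (Ico (u n) t) := fun n => (hIcoint n).add (hKfint n)
  have hfae : 0 ≤ᵐ[volume.restrict I] f :=
    ae_restrict_of_forall_mem hI.measurableSet hfpos
  have hval : ∀ n, ∫ x in Ico (u n) t, (M - x) * f x ≤ lam t * f t := by
    intro n
    rw [show ∫ x in Ico (u n) t, (M - x) * f x = ∫ x in Ioc (u n) t, (M - x) * f x by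
      rw [hrestr n]]
    by_cases htu : u n ≤ t
    · have hftc := (ftc_aux I hI f lam M hode hfint (huI n) ht htu).2
      have hneg : ∫ x in Ioc (u n) t, (M - x) * f x
          = -∫ x in Ioc (u n) t, (x - M) * f x := by
        rw [← integral_neg]
        apply integral_congr_ae
        apply ae_of_all
        intro x
        ring
      rw [hneg, hftc]
      have : 0 ≤ lam (u n) * f (u n) := mul_nonneg (hlam _ (huI n)) (hfpos _ (huI n))
      linarith
    · rw [Ioc_eq_empty (fun hlt => htu hlt.le)]
      simpa using hΛt0
  have hbound : ∀ n, ∫ x in Ico (u n) t, h x ≤ lam t * f t + K := by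
    intro n
    rw [integral_add (hIcoint n) (hKfint n), integral_const_mul]
    have h2 : ∫ x in Ico (u n) t, f x ≤ 1 := by
      refine le_trans (setIntegral_mono_set hfint hfae ?_) hf1le
      exact HasSubset.Subset.eventuallyLE (hIcoI n)
    have h3 : K * ∫ x in Ico (u n) t, f x ≤ K * 1 :=
      mul_le_mul_of_nonneg_left h2 hK0
    have := hval n
    linarith
  set S := I ∩ Iio t with hSdef
  have hSmeas : MeasurableSet S := hI.measurableSet.inter measurableSet_Iio
  have hfS : AEStronglyMeasurable f (volume.restrict S) :=
    (hfint.mono_set inter_subset_left).1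
  have hhS : AEStronglyMeasurable h (volume.restrict S) := by
    apply AEStronglyMeasurable.add
    · exact (((continuous_const.sub continuous_id).aestronglyMeasurable).restrict).mul hfS
    · exact hfS.const_mul K
  have hhae : 0 ≤ᵐ[volume.restrict S] h := ae_restrict_of_forall_mem hSmeas hh0
  have hlin : ∫⁻ x in S, ENNReal.ofReal (h x) ≤ ENNReal.ofReal (lam t * f t + K) := by
    rw [← hucov, setLIntegral_iUnion_of_directed _ hmono.directed_le]
    apply iSup_le
    intro n
    have hae_n : 0 ≤ᵐ[volume.restrict (Ico (u n) t)] h :=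
      ae_restrict_of_forall_mem measurableSet_Ico (fun x hx => hh0 x (hIcoS n hx))
    rw [← ofReal_integral_eq_lintegral_ofReal (hhint n) hae_n]
    exact ENNReal.ofReal_le_ofReal (hbound n)
  have hhintS : IntegrableOn h S := by
    refine ⟨hhS, ?_⟩
    rw [hasFiniteIntegral_iff_norm]
    calc ∫⁻ x in S, ENNReal.ofReal ‖h x‖
        = ∫⁻ x in S, ENNReal.ofReal (h x) := by
          apply lintegral_congr_ae
          filter_upwards [hhae] with x hx
          rw [Real.norm_of_nonneg hx]
      _ ≤ ENNReal.ofReal (lam t * f t + K) := hlin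
      _ < ⊤ := ENNReal.ofReal_lt_top
  have hint : IntegrableOn (fun x => (M - x) * f x) S := by
    have := hhintS.sub ((hfint.mono_set inter_subset_left).const_mul K)
    apply this.congr
    apply ae_of_all
    intro x
    simp only [hhdef, Pi.sub_apply]
    ring
  refine ⟨hint, ?_⟩
  have htend := tendsto_setIntegral_of_monotone (fun n => measurableSet_Ico) hmono
    (by rw [hucov]; exact hint)
  rw [hucov] at htend
  exact le_of_tendsto htend (Filter.Eventually.of_forall hval)

theorem weighted_chernoff_general (I : Set ℝ) (hI : I.OrdConnected)
    (f lam φ : ℝ → ℝ) (M : ℝ)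
    (hfpos : ∀ x ∈ I, 0 ≤ f x) (hf1 : ∫ x in I, f x = 1)
    (hlam : ∀ x ∈ I, 0 ≤ lam x) (hM : 0 ≤ M)
    (hode : ∀ x ∈ I, HasDerivAt (fun y => lam y * f y) (-((x - M) * f x)) x)
    (hφ : ContDiff ℝ (⊤ : ℕ∞) φ)
    (hvar : IntegrableOn (fun x => φ x ^ 2 * f x) I)
    (hrhs : IntegrableOn (fun x => lam x * (deriv φ x) ^ 2 * f x) I) :
    (∫ x in I, φ x ^ 2 * f x) - (∫ x in I, φ x * f x) ^ 2 ≤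
      ∫ x in I, lam x * (deriv φ x) ^ 2 * f x := by
  classical
  set μ := volume.restrict I with hμdef
  have hImeas : MeasurableSet I := hI.measurableSet
  have hfint : IntegrableOn f I := by
    by_contra hcon
    rw [integral_undef hcon] at hf1
    norm_num at hf1
  have hf1le : ∫ x in I, f x ≤ 1 := le_of_eq hf1
  have hfae : 0 ≤ᵐ[μ] f := ae_restrict_of_forall_mem hImeas hfpos
  -- measurable nonnegative version of f
  obtain ⟨g1, hg1meas, hg1ae⟩ := hfint.1
  set g : ℝ → ℝ := fun x => max (g1 x) 0 with hgdef
  have hgmeas : Measurable g := hg1meas.measurable.max measurable_const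
  have hg0 : ∀ x, 0 ≤ g x := fun x => le_max_right _ _
  have hfg : f =ᵐ[μ] g := by
    filter_upwards [hg1ae, hfae] with x h1 h2
    simp only [Pi.zero_apply] at h2
    simp only [hgdef, ← h1]
    exact (max_eq_left h2).symm
  -- continuity facts
  have hφc : Continuous φ := hφ.continuous
  have hφ'c : Continuous (deriv φ) := hφ.continuous_deriv (by simp)
  have hφd : ∀ x, HasDerivAt φ (deriv φ x) x := fun x =>
    ((hφ.differentiable (by simp)) x).hasDerivAt
  -- φ * f integrable
  have hphif : IntegrableOn (fun x => φ x * f x) I := by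
    have hb : ∀ᵐ x ∂μ, ‖φ x * f x‖ ≤ (φ x ^ 2 * f x + f x) / 2 := by
      filter_upwards [hfae] with x hx
      simp only [Pi.zero_apply] at hx
      rw [Real.norm_eq_abs, abs_mul, abs_of_nonneg hx]
      nlinarith [mul_nonneg (sq_nonneg (|φ x| - 1)) hx, sq_abs (φ x)]
    exact Integrable.mono' ((hvar.add hfint).div_const 2)
      ((hφc.aestronglyMeasurable.restrict).mul hfint.1) hb
  -- the key per-point inequality
  have keyW : ∀ t ∈ I,
      IntegrableOn (fun x => (x - t) * f x) (I ∩ Ioi t) ∧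
      IntegrableOn (fun y => (t - y) * f y) (I ∩ Iio t) ∧
      (∫ x in I ∩ Ioi t, (x - t) * f x) * (∫ y in I ∩ Iio t, f y)
        + (∫ x in I ∩ Ioi t, f x) * (∫ y in I ∩ Iio t, (t - y) * f y) ≤ lam t * f t := by
    intro t ht
    obtain ⟨intS, hS⟩ := key_above I hI f lam M hfpos hlam hode hfint hf1le ht
    obtain ⟨intT, hT⟩ := key_below I hI f lam M hfpos hlam hode hfint hf1le ht
    have hUint : IntegrableOn f (I ∩ Ioi t) := hfint.mono_set inter_subset_left
    have hLint : IntegrableOn f (I ∩ Iio t) := hfint.mono_set inter_subset_left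
    have hintA : IntegrableOn (fun x => (x - t) * f x) (I ∩ Ioi t) := by
      have h := intS.add (hUint.const_mul (M - t))
      exact h.congr (ae_of_all _ fun x => by simp only [Pi.add_apply]; ring)
    have hintB : IntegrableOn (fun y => (t - y) * f y) (I ∩ Iio t) := by
      have h := intT.add (hLint.const_mul (t - M))
      exact h.congr (ae_of_all _ fun y => by simp only [Pi.add_apply]; ring)
    refine ⟨hintA, hintB, ?_⟩
    have hA : ∫ x in I ∩ Ioi t, (x - t) * f x
        = (∫ x in I ∩ Ioi t, (x - M) * f x) + (M - t) * ∫ x in I ∩ Ioi t, f x := by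
      rw [← integral_const_mul, ← integral_add intS (hUint.const_mul (M - t))]
      exact integral_congr_ae (ae_of_all _ fun x => by ring)
    have hB : ∫ y in I ∩ Iio t, (t - y) * f y
        = (∫ y in I ∩ Iio t, (M - y) * f y) + (t - M) * ∫ y in I ∩ Iio t, f y := by
      rw [← integral_const_mul, ← integral_add intT (hLint.const_mul (t - M))]
      exact integral_congr_ae (ae_of_all _ fun y => by ring)
    have hU0 : 0 ≤ ∫ x in I ∩ Ioi t, f x :=
      setIntegral_nonneg (hImeas.inter measurableSet_Ioi) (fun x hx => hfpos x hx.1)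
    have hL0 : 0 ≤ ∫ y in I ∩ Iio t, f y :=
      setIntegral_nonneg (hImeas.inter measurableSet_Iio) (fun x hx => hfpos x hx.1)
    have hsum : (∫ y in I ∩ Iio t, f y) + (∫ x in I ∩ Ioi t, f x) = 1 := by
      have hdisj : Disjoint (I ∩ Iio t) (I ∩ Ioi t) := by
        apply Set.disjoint_left.mpr
        rintro x ⟨-, h1⟩ ⟨-, h2⟩
        exact absurd (lt_trans h1 h2) (lt_irrefl x)
      have hunion : (I ∩ Iio t) ∪ (I ∩ Ioi t) = I \ {t} := by
        ext z
        simp only [mem_union, mem_inter_iff, mem_Iio, mem_Ioi, mem_diff, mem_singleton_iff]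
        constructor
        · rintro (⟨h1, h2⟩ | ⟨h1, h2⟩)
          · exact ⟨h1, ne_of_lt h2⟩
          · exact ⟨h1, ne_of_gt h2⟩
        · rintro ⟨h1, h2⟩
          rcases lt_or_gt_of_ne h2 with h | h
          · exact Or.inl ⟨h1, h⟩
          · exact Or.inr ⟨h1, h⟩
      have := setIntegral_union hdisj (hImeas.inter measurableSet_Ioi) hLint hUint (f := f)
      rw [hunion] at this
      rw [← this]
      rw [show volume.restrict (I \ {t}) = μ from
        Measure.restrict_congr_set (diff_ae_eq_self.mpr (measure_mono_null inter_subset_right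
          (measure_singleton t)))]
      exact hf1
    have hΛ0 : 0 ≤ lam t * f t := mul_nonneg (hlam t ht) (hfpos t ht)
    set SS := ∫ x in I ∩ Ioi t, (x - M) * f x
    set TT := ∫ y in I ∩ Iio t, (M - y) * f y
    set UU := ∫ x in I ∩ Ioi t, f x
    set LL := ∫ y in I ∩ Iio t, f y
    calc (∫ x in I ∩ Ioi t, (x - t) * f x) * LL + UU * (∫ y in I ∩ Iio t, (t - y) * f y)
        = SS * LL + UU * TT + ((M - t) * UU * LL + (t - M) * UU * LL) := by
          rw [hA, hB]; ring
      _ = SS * LL + UU * TT := by ring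
      _ ≤ (lam t * f t) * LL + UU * (lam t * f t) :=
          add_le_add (mul_le_mul_of_nonneg_right hS hL0) (mul_le_mul_of_nonneg_left hT hU0)
      _ = (lam t * f t) * (LL + UU) := by ring
      _ = lam t * f t := by rw [show LL + UU = 1 from hsum, mul_one]
  -- ENNReal machinery
  set EV := (∫ x, φ x ^ 2 * f x ∂μ) - (∫ x, φ x * f x ∂μ) ^ 2 with hEVdef
  set DD := ∫ x, lam x * deriv φ x ^ 2 * f x ∂μ with hDDdef
  have hD0 : 0 ≤ DD := setIntegral_nonneg hImeas fun x hx =>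
    mul_nonneg (mul_nonneg (hlam x hx) (sq_nonneg _)) (hfpos x hx)
  set ψe : ℝ → ℝ≥0∞ := fun s => ENNReal.ofReal (deriv φ s ^ 2) with hψedef
  set Gg : ℝ → ℝ≥0∞ := fun x => ENNReal.ofReal (g x) with hGgdef
  set R : ℝ × ℝ → ℝ≥0∞ := fun p => ENNReal.ofReal (p.1 - p.2) * (Gg p.1 * Gg p.2) with hRdef
  set KK : ℝ × ℝ → ℝ → ℝ≥0∞ := fun p s => (Ioc p.2 p.1).indicator ψe s * R p with hKKdef
  set bb : ℝ × ℝ → ℝ≥0∞ := fun p => ∫⁻ s, KK p s with hbbdef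
  have hψem : Measurable ψe := ((hφ'c.pow 2).measurable).ennreal_ofReal
  have hGgm : Measurable Gg := hgmeas.ennreal_ofReal
  have hRm : Measurable R :=
    ((measurable_fst.sub measurable_snd).ennreal_ofReal).mul
      ((hGgm.comp measurable_fst).mul (hGgm.comp measurable_snd))
  have hRne : ∀ p, R p ≠ ⊤ := fun p =>
    ENNReal.mul_ne_top ENNReal.ofReal_ne_top
      (ENNReal.mul_ne_top ENNReal.ofReal_ne_top ENNReal.ofReal_ne_top)
  have hsetm : MeasurableSet {q : (ℝ × ℝ) × ℝ | q.1.2 < q.2 ∧ q.2 ≤ q.1.1} :=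
    (measurableSet_lt (measurable_fst.snd) measurable_snd).inter
      (measurableSet_le measurable_snd (measurable_fst.fst))
  have hKKm : Measurable (fun q : (ℝ × ℝ) × ℝ => KK q.1 q.2) := by
    have heq : (fun q : (ℝ × ℝ) × ℝ => KK q.1 q.2)
        = fun q => ({q : (ℝ × ℝ) × ℝ | q.1.2 < q.2 ∧ q.2 ≤ q.1.1}.indicator
            (fun q => ψe q.2) q) * R q.1 := by
      funext q
      simp only [hKKdef, Set.indicator_apply, mem_Ioc, mem_setOf_eq]
    rw [heq]
    exact ((hψem.comp measurable_snd).indicator hsetm).mul (hRm.comp measurable_fst)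
  have hbbm : Measurable bb := Measurable.lintegral_prod_right' hKKm
  have hbbform : ∀ p : ℝ × ℝ, bb p = (∫⁻ s in Ioc p.2 p.1, ψe s) * R p := by
    intro p
    simp only [hbbdef, hKKdef]
    rw [lintegral_mul_const' _ _ (hRne p), lintegral_indicator measurableSet_Ioc]
  -- Step 1 : 2 * EV as a double integral
  have hfg1 : (fun p : ℝ × ℝ => f p.1) =ᵐ[μ.prod μ] fun p => g p.1 :=
    Measure.quasiMeasurePreserving_fst.ae_eq hfg
  have hfg2 : (fun p : ℝ × ℝ => f p.2) =ᵐ[μ.prod μ] fun p => g p.2 :=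
    Measure.quasiMeasurePreserving_snd.ae_eq hfg
  set big : ℝ × ℝ → ℝ := fun p => (φ p.1 - φ p.2) ^ 2 * (f p.1 * f p.2) with hbigdef
  have e1 : Integrable (fun p : ℝ × ℝ => (φ p.1 ^ 2 * f p.1) * f p.2) (μ.prod μ) :=
    Integrable.mul_prod hvar hfint
  have e2 : Integrable (fun p : ℝ × ℝ => f p.1 * (φ p.2 ^ 2 * f p.2)) (μ.prod μ) :=
    Integrable.mul_prod hfint hvar
  have e3 : Integrable (fun p : ℝ × ℝ => (φ p.1 * f p.1) * (φ p.2 * f p.2)) (μ.prod μ) :=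
    Integrable.mul_prod hphif hphif
  have ebig : Integrable big (μ.prod μ) := by
    have h := (e1.add e2).sub (e3.const_mul 2)
    apply h.congr (ae_of_all _ fun p => ?_)
    simp only [hbigdef, Pi.sub_apply, Pi.add_apply]
    ring
  have hbigval : ∫ p, big p ∂(μ.prod μ) = 2 * EV := by
    have h : ∫ p, big p ∂(μ.prod μ) = ∫ p : ℝ × ℝ, ((φ p.1 ^ 2 * f p.1) * f p.2
        + f p.1 * (φ p.2 ^ 2 * f p.2) - 2 * ((φ p.1 * f p.1) * (φ p.2 * f p.2))) ∂(μ.prod μ) :=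
      integral_congr_ae (ae_of_all _ fun p => by simp only [hbigdef]; ring)
    have e12 : Integrable (fun p : ℝ × ℝ =>
        (φ p.1 ^ 2 * f p.1) * f p.2 + f p.1 * (φ p.2 ^ 2 * f p.2)) (μ.prod μ) := e1.add e2
    have e3' : Integrable (fun p : ℝ × ℝ =>
        2 * ((φ p.1 * f p.1) * (φ p.2 * f p.2))) (μ.prod μ) := e3.const_mul 2
    rw [h, integral_sub e12 e3', integral_add e1 e2, integral_const_mul]
    have q1 : ∫ p : ℝ × ℝ, (φ p.1 ^ 2 * f p.1) * f p.2 ∂(μ.prod μ)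
        = (∫ x, φ x ^ 2 * f x ∂μ) * ∫ x, f x ∂μ :=
      integral_prod_mul (fun x => φ x ^ 2 * f x) f
    have q2 : ∫ p : ℝ × ℝ, f p.1 * (φ p.2 ^ 2 * f p.2) ∂(μ.prod μ)
        = (∫ x, f x ∂μ) * ∫ x, φ x ^ 2 * f x ∂μ :=
      integral_prod_mul f (fun x => φ x ^ 2 * f x)
    have q3 : ∫ p : ℝ × ℝ, (φ p.1 * f p.1) * (φ p.2 * f p.2) ∂(μ.prod μ)
        = (∫ x, φ x * f x ∂μ) * ∫ x, φ x * f x ∂μ :=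
      integral_prod_mul (fun x => φ x * f x) (fun x => φ x * f x)
    rw [q1, q2, q3, hf1]
    simp only [hEVdef]
    ring
  have hbignn : 0 ≤ᵐ[μ.prod μ] big := by
    filter_upwards [hfg1, hfg2] with p h1 h2
    simp only [hbigdef]
    rw [show f p.1 = g p.1 from h1, show f p.2 = g p.2 from h2]
    exact mul_nonneg (sq_nonneg _) (mul_nonneg (hg0 _) (hg0 _))
  -- pointwise Cauchy-Schwarz bound
  have hcs_pair : ∀ x y : ℝ, y ≤ x →
      (φ x - φ y) ^ 2 ≤ (x - y) * ∫ s in Ioc y x, deriv φ s ^ 2 := by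
    intro x y hyx
    have hftc : ∫ s in Ioc y x, deriv φ s = φ x - φ y := by
      have h := intervalIntegral.integral_eq_sub_of_hasDerivAt (f := φ)
        (fun s _ => hφd s) (hφ'c.intervalIntegrable y x)
      rwa [intervalIntegral.integral_of_le hyx] at h
    calc (φ x - φ y) ^ 2 = (∫ s in Ioc y x, deriv φ s) ^ 2 := by rw [hftc]
      _ ≤ (x - y) * ∫ s in Ioc y x, deriv φ s ^ 2 := cs_aux hφ'c hyx
  have hbb_of : ∀ p : ℝ × ℝ, p.2 ≤ p.1 → bb p
      = ENNReal.ofReal (((p.1 - p.2) * ∫ s in Ioc p.2 p.1, deriv φ s ^ 2)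
          * (g p.1 * g p.2)) := by
    intro p hyx
    rw [hbbform p]
    have hRps : ∫⁻ s in Ioc p.2 p.1, ψe s
        = ENNReal.ofReal (∫ s in Ioc p.2 p.1, deriv φ s ^ 2) := by
      rw [hψedef]; exact (ofReal_integral_eq_lintegral_ofReal ((hφ'c.pow 2).integrableOn_Ioc)
        (ae_of_all _ fun s => sq_nonneg _)).symm
    have hRint : 0 ≤ ∫ s in Ioc p.2 p.1, deriv φ s ^ 2 :=
      integral_nonneg fun s => sq_nonneg _
    rw [hRps, hRdef]
    dsimp only
    rw [← ENNReal.ofReal_mul (hg0 p.1), ← ENNReal.ofReal_mul (sub_nonneg.mpr hyx),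
      ← ENNReal.ofReal_mul hRint]
    congr 1
    ring
  have hpt : ∀ᵐ p ∂(μ.prod μ), ENNReal.ofReal (big p) ≤ bb p + bb p.swap := by
    filter_upwards [hfg1, hfg2] with p h1 h2
    have hgg : 0 ≤ g p.1 * g p.2 := mul_nonneg (hg0 _) (hg0 _)
    simp only [hbigdef]
    rw [show f p.1 = g p.1 from h1, show f p.2 = g p.2 from h2]
    rcases le_total p.2 p.1 with hyx | hxy
    · refine le_trans ?_ le_self_add
      rw [hbb_of p hyx]
      apply ENNReal.ofReal_le_ofReal
      exact mul_le_mul_of_nonneg_right (hcs_pair p.1 p.2 hyx) hgg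
    · refine le_trans ?_ le_add_self
      have hsw : p.swap.2 ≤ p.swap.1 := by simpa using hxy
      rw [hbb_of p.swap hsw]
      simp only [Prod.fst_swap, Prod.snd_swap]
      apply ENNReal.ofReal_le_ofReal
      have := mul_le_mul_of_nonneg_right (hcs_pair p.2 p.1 hxy)
        (show (0:ℝ) ≤ g p.2 * g p.1 by rw [mul_comm]; exact hgg)
      calc (φ p.1 - φ p.2) ^ 2 * (g p.1 * g p.2)
          = (φ p.2 - φ p.1) ^ 2 * (g p.2 * g p.1) := by ring
        _ ≤ ((p.2 - p.1) * ∫ s in Ioc p.1 p.2, deriv φ s ^ 2) * (g p.2 * g p.1) := this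
  have hofReal2EV : ENNReal.ofReal (2 * EV) = ∫⁻ p, ENNReal.ofReal (big p) ∂(μ.prod μ) := by
    rw [← hbigval]
    exact ofReal_integral_eq_lintegral_ofReal ebig hbignn
  have hswapint : ∫⁻ p, bb p.swap ∂(μ.prod μ) = ∫⁻ p, bb p ∂(μ.prod μ) := by
    have h := lintegral_map (μ := μ.prod μ) hbbm measurable_swap
    rw [Measure.prod_swap] at h
    exact h.symm
  have hC1 : ENNReal.ofReal (2 * EV) ≤ 2 * ∫⁻ p, bb p ∂(μ.prod μ) := by
    rw [hofReal2EV]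
    calc ∫⁻ p, ENNReal.ofReal (big p) ∂(μ.prod μ)
        ≤ ∫⁻ p, (bb p + bb p.swap) ∂(μ.prod μ) := lintegral_mono_ae hpt
      _ = (∫⁻ p, bb p ∂(μ.prod μ)) + ∫⁻ p, bb p.swap ∂(μ.prod μ) :=
          lintegral_add_left hbbm _
      _ = 2 * ∫⁻ p, bb p ∂(μ.prod μ) := by rw [hswapint, two_mul]
  -- Step 3 : bound the double lintegral by DD
  have hKps : ∀ s : ℝ, ∀ p : ℝ × ℝ, KK p s
      = ψe s * ((Ici s ×ˢ Iio s).indicator R p) := by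
    intro s p
    simp only [hKKdef, Set.indicator_apply, mem_Ioc, mem_prod, mem_Ici, mem_Iio]
    by_cases h : p.2 < s ∧ s ≤ p.1
    · rw [if_pos h, if_pos ⟨h.2, h.1⟩]
    · rw [if_neg h, if_neg (fun hc => h ⟨hc.2, hc.1⟩), zero_mul, mul_zero]
  have hinner : ∀ s : ℝ, (∫⁻ p, KK p s ∂(μ.prod μ))
      ≤ I.indicator (fun s => ENNReal.ofReal (lam s * deriv φ s ^ 2 * f s)) s := by
    intro s
    have hres1 : μ.restrict (Ici s) = volume.restrict (I ∩ Ioi s) := by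
      rw [hμdef, Measure.restrict_restrict measurableSet_Ici, Set.inter_comm (Ici s) I]
      exact Measure.restrict_congr_set (ae_eq_set_inter (ae_eq_refl I) Ioi_ae_eq_Ici.symm)
    have hres2 : μ.restrict (Iio s) = volume.restrict (I ∩ Iio s) := by
      rw [hμdef, Measure.restrict_restrict measurableSet_Iio, Set.inter_comm (Iio s) I]
    have hpull : ∫⁻ p, KK p s ∂(μ.prod μ) = ψe s *
        ∫⁻ x, ∫⁻ y, R (x, y) ∂(volume.restrict (I ∩ Iio s)) ∂(volume.restrict (I ∩ Ioi s)) := by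
      calc ∫⁻ p, KK p s ∂(μ.prod μ)
          = ∫⁻ p, ψe s * ((Ici s ×ˢ Iio s).indicator R p) ∂(μ.prod μ) :=
            lintegral_congr fun p => hKps s p
        _ = ψe s * ∫⁻ p, (Ici s ×ˢ Iio s).indicator R p ∂(μ.prod μ) :=
            lintegral_const_mul' _ _ ENNReal.ofReal_ne_top
        _ = ψe s * ∫⁻ p in Ici s ×ˢ Iio s, R p ∂(μ.prod μ) := by
            rw [lintegral_indicator (measurableSet_Ici.prod measurableSet_Iio)]
        _ = ψe s * ∫⁻ p, R p ∂((μ.restrict (Ici s)).prod (μ.restrict (Iio s))) := by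
            rw [Measure.prod_restrict (Ici s) (Iio s)]
        _ = ψe s * ∫⁻ x, ∫⁻ y, R (x, y)
              ∂(volume.restrict (I ∩ Iio s)) ∂(volume.restrict (I ∩ Ioi s)) := by
            rw [hres1, hres2, lintegral_prod _ hRm.aemeasurable]
    rw [hpull]
    by_cases hsI : s ∈ I
    · -- main case
      obtain ⟨hintA, hintB, hW⟩ := keyW s hsI
      have hm1 : MeasurableSet (I ∩ Ioi s) := hImeas.inter measurableSet_Ioi
      have hm2 : MeasurableSet (I ∩ Iio s) := hImeas.inter measurableSet_Iio
      have hmemi : ∀ᵐ x ∂(volume.restrict (I ∩ Ioi s)), x ∈ I ∩ Ioi s := ae_restrict_mem hm1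
      have hmemii : ∀ᵐ y ∂(volume.restrict (I ∩ Iio s)), y ∈ I ∩ Iio s := ae_restrict_mem hm2
      have hle1 : volume.restrict (I ∩ Ioi s) ≤ μ := by
        rw [hμdef]; exact Measure.restrict_mono inter_subset_left le_rfl
      have hle2 : volume.restrict (I ∩ Iio s) ≤ μ := by
        rw [hμdef]; exact Measure.restrict_mono inter_subset_left le_rfl
      have hfgi : f =ᵐ[volume.restrict (I ∩ Ioi s)] g :=
        hfg.filter_mono (ae_mono hle1)
      have hfgii : f =ᵐ[volume.restrict (I ∩ Iio s)] g :=
        hfg.filter_mono (ae_mono hle2)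
      have hfnn1 : 0 ≤ᵐ[volume.restrict (I ∩ Ioi s)] f := hfae.filter_mono (ae_mono hle1)
      have hfnn2 : 0 ≤ᵐ[volume.restrict (I ∩ Iio s)] f := hfae.filter_mono (ae_mono hle2)
      set Ar := ∫ x in I ∩ Ioi s, (x - s) * f x with hArdef
      set Br := ∫ y in I ∩ Iio s, (s - y) * f y with hBrdef
      set Ur := ∫ x in I ∩ Ioi s, f x with hUrdef
      set Lr := ∫ y in I ∩ Iio s, f y with hLrdef
      have hAr0 : 0 ≤ Ar := setIntegral_nonneg hm1 fun x hx =>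
        mul_nonneg (by have := hx.2; simp only [mem_Ioi] at this; linarith) (hfpos x hx.1)
      have hBr0 : 0 ≤ Br := setIntegral_nonneg hm2 fun y hy =>
        mul_nonneg (by have := hy.2; simp only [mem_Iio] at this; linarith) (hfpos y hy.1)
      have hUr0 : 0 ≤ Ur := setIntegral_nonneg hm1 fun x hx => hfpos x hx.1
      have hLr0 : 0 ≤ Lr := setIntegral_nonneg hm2 fun y hy => hfpos y hy.1
      have hL0 : ∫⁻ y, Gg y ∂(volume.restrict (I ∩ Iio s)) = ENNReal.ofReal Lr := by
        rw [show ∫⁻ y, Gg y ∂(volume.restrict (I ∩ Iio s))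
            = ∫⁻ y, ENNReal.ofReal (f y) ∂(volume.restrict (I ∩ Iio s)) from
          lintegral_congr_ae (hfgii.mono fun y hy => by rw [hGgdef]; dsimp only; rw [← hy])]
        exact (ofReal_integral_eq_lintegral_ofReal (hfint.mono_set inter_subset_left)
          hfnn2).symm
      have hU0 : ∫⁻ x, Gg x ∂(volume.restrict (I ∩ Ioi s)) = ENNReal.ofReal Ur := by
        rw [show ∫⁻ x, Gg x ∂(volume.restrict (I ∩ Ioi s))
            = ∫⁻ x, ENNReal.ofReal (f x) ∂(volume.restrict (I ∩ Ioi s)) from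
          lintegral_congr_ae (hfgi.mono fun x hx => by rw [hGgdef]; dsimp only; rw [← hx])]
        exact (ofReal_integral_eq_lintegral_ofReal (hfint.mono_set inter_subset_left)
          hfnn1).symm
      have hA0 : ∫⁻ x, ENNReal.ofReal (x - s) * Gg x ∂(volume.restrict (I ∩ Ioi s))
          = ENNReal.ofReal Ar := by
        have hcg : ∀ᵐ x ∂(volume.restrict (I ∩ Ioi s)),
            ENNReal.ofReal (x - s) * Gg x = ENNReal.ofReal ((x - s) * f x) := by
          filter_upwards [hmemi, hfgi] with x hx hfx
          rw [hGgdef]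
          dsimp only
          rw [← hfx, ← ENNReal.ofReal_mul (by have := hx.2; simp only [mem_Ioi] at this; linarith)]
        rw [lintegral_congr_ae hcg]
        refine (ofReal_integral_eq_lintegral_ofReal hintA ?_).symm
        filter_upwards [hmemi, hfnn1] with x hx hfx
        exact mul_nonneg (by have := hx.2; simp only [mem_Ioi] at this; linarith) hfx
      have hB0 : ∫⁻ y, ENNReal.ofReal (s - y) * Gg y ∂(volume.restrict (I ∩ Iio s))
          = ENNReal.ofReal Br := by
        have hcg : ∀ᵐ y ∂(volume.restrict (I ∩ Iio s)),
            ENNReal.ofReal (s - y) * Gg y = ENNReal.ofReal ((s - y) * f y) := by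
          filter_upwards [hmemii, hfgii] with y hy hfy
          rw [hGgdef]
          dsimp only
          rw [← hfy, ← ENNReal.ofReal_mul (by have := hy.2; simp only [mem_Iio] at this; linarith)]
        rw [lintegral_congr_ae hcg]
        refine (ofReal_integral_eq_lintegral_ofReal hintB ?_).symm
        filter_upwards [hmemii, hfnn2] with y hy hfy
        exact mul_nonneg (by have := hy.2; simp only [mem_Iio] at this; linarith) hfy
      have hinner_y : ∀ x : ℝ, s ≤ x →
          (∫⁻ y, R (x, y) ∂(volume.restrict (I ∩ Iio s)))
          = (ENNReal.ofReal (x - s) * Gg x) * ENNReal.ofReal Lr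
            + Gg x * ENNReal.ofReal Br := by
        intro x hx
        have hcongr : ∀ᵐ y ∂(volume.restrict (I ∩ Iio s)), R (x, y)
            = (ENNReal.ofReal (x - s) * Gg x) * Gg y
              + Gg x * (ENNReal.ofReal (s - y) * Gg y) := by
          filter_upwards [hmemii] with y hy
          have hys : y < s := by have := hy.2; simpa using this
          rw [hRdef]
          dsimp only
          rw [show x - y = (x - s) + (s - y) by ring,
            ENNReal.ofReal_add (by linarith) (by linarith)]
          ring
        rw [lintegral_congr_ae hcongr,
          lintegral_add_left ((hGgm.const_mul _)),
          lintegral_const_mul' _ _ (ENNReal.mul_ne_top ENNReal.ofReal_ne_top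
            ENNReal.ofReal_ne_top),
          lintegral_const_mul' _ _ ENNReal.ofReal_ne_top,
          hL0, hB0]
      have houter : (∫⁻ x, ∫⁻ y, R (x, y)
            ∂(volume.restrict (I ∩ Iio s)) ∂(volume.restrict (I ∩ Ioi s)))
          = ENNReal.ofReal Ar * ENNReal.ofReal Lr + ENNReal.ofReal Ur * ENNReal.ofReal Br := by
        have hcongr : ∀ᵐ x ∂(volume.restrict (I ∩ Ioi s)),
            (∫⁻ y, R (x, y) ∂(volume.restrict (I ∩ Iio s)))
            = (ENNReal.ofReal (x - s) * Gg x) * ENNReal.ofReal Lr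
              + Gg x * ENNReal.ofReal Br := by
          filter_upwards [hmemi] with x hx
          exact hinner_y x (by have := hx.2; simp only [mem_Ioi] at this; linarith)
        have hmA : Measurable fun x : ℝ =>
            ENNReal.ofReal (x - s) * Gg x * ENNReal.ofReal Lr :=
          (((measurable_id.sub measurable_const).ennreal_ofReal).mul hGgm).mul_const _
        rw [lintegral_congr_ae hcongr,
          lintegral_add_left hmA,
          lintegral_mul_const' _ _ ENNReal.ofReal_ne_top,
          lintegral_mul_const' _ _ ENNReal.ofReal_ne_top,
          hA0, hU0]
      rw [houter]
      calc ψe s * (ENNReal.ofReal Ar * ENNReal.ofReal Lr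
            + ENNReal.ofReal Ur * ENNReal.ofReal Br)
          = ψe s * ENNReal.ofReal (Ar * Lr + Ur * Br) := by
            rw [← ENNReal.ofReal_mul hAr0, ← ENNReal.ofReal_mul hUr0,
              ← ENNReal.ofReal_add (mul_nonneg hAr0 hLr0) (mul_nonneg hUr0 hBr0)]
        _ ≤ ψe s * ENNReal.ofReal (lam s * f s) := by
            exact mul_le_mul_right (ENNReal.ofReal_le_ofReal hW) _
        _ = ENNReal.ofReal (lam s * deriv φ s ^ 2 * f s) := by
            rw [hψedef]
            dsimp only
            rw [← ENNReal.ofReal_mul (sq_nonneg _)]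
            congr 1
            ring
        _ = I.indicator (fun s => ENNReal.ofReal (lam s * deriv φ s ^ 2 * f s)) s :=
            (Set.indicator_of_mem hsI
              (fun s => ENNReal.ofReal (lam s * deriv φ s ^ 2 * f s))).symm
    · -- s not in I : left side vanishes
      rcases Set.eq_empty_or_nonempty (I ∩ Ioi s) with h1 | h1
      · rw [h1, Measure.restrict_empty, lintegral_zero_measure, mul_zero]
        exact zero_le
      · rcases Set.eq_empty_or_nonempty (I ∩ Iio s) with h2 | h2
        · rw [h2, Measure.restrict_empty]
          simp only [lintegral_zero_measure, lintegral_zero, mul_zero]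
          exact zero_le
        · exfalso
          obtain ⟨x, hxI, hxs⟩ := h1
          obtain ⟨y, hyI, hys⟩ := h2
          exact hsI (hI.out hyI hxI ⟨le_of_lt hys, le_of_lt hxs⟩)
  have hC3 : ∫⁻ p, bb p ∂(μ.prod μ) ≤ ENNReal.ofReal DD := by
    have hsw : ∫⁻ p, bb p ∂(μ.prod μ) = ∫⁻ s, ∫⁻ p, KK p s ∂(μ.prod μ) ∂volume :=
      lintegral_lintegral_swap hKKm.aemeasurable
    rw [hsw]
    calc ∫⁻ s, ∫⁻ p, KK p s ∂(μ.prod μ) ∂volume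
        ≤ ∫⁻ s, I.indicator (fun s => ENNReal.ofReal (lam s * deriv φ s ^ 2 * f s)) s
            ∂volume := lintegral_mono hinner
      _ = ∫⁻ s in I, ENNReal.ofReal (lam s * deriv φ s ^ 2 * f s) ∂volume := by
          rw [lintegral_indicator hImeas]
      _ = ENNReal.ofReal DD := (ofReal_integral_eq_lintegral_ofReal hrhs
          (ae_restrict_of_forall_mem hImeas fun x hx =>
            mul_nonneg (mul_nonneg (hlam x hx) (sq_nonneg _)) (hfpos x hx))).symm
  have hfinal : ENNReal.ofReal (2 * EV) ≤ ENNReal.ofReal (2 * DD) := by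
    refine hC1.trans ?_
    calc 2 * ∫⁻ p, bb p ∂(μ.prod μ) ≤ 2 * ENNReal.ofReal DD := mul_le_mul_right hC3 2
      _ = ENNReal.ofReal (2 * DD) := by
          rw [two_mul, two_mul, ENNReal.ofReal_add hD0 hD0]
  rcases le_or_gt EV 0 with hEV | hEV
  · exact hEV.trans hD0
  · have h2 := (ENNReal.ofReal_le_ofReal_iff (by linarith)).mp hfinal
    linarith
end

section
/- If X is Gamma distributed with shape κ and scale θ (density x^{κ-1}e^{-x/θ}/(θ^κ Γ(κ)) on ℝ₊), then for any smooth function φ with φ(X) of finite variance, Var[φ(X)] ≤ θ E[X (φ'(X))²]. -/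
open MeasureTheory Set

noncomputable def gammaDensity (k s x : ℝ) : ℝ :=
  x ^ (k - 1) * Real.exp (-x / s) / (s ^ k * Real.Gamma k)

namespace GammaChernoffAux

open Real Filter

lemma gd_eq (θ κ x : ℝ) :
    gammaDensity κ θ x = x ^ (κ - 1) * Real.exp (-(θ⁻¹ * x)) / (θ ^ κ * Real.Gamma κ) := by
  unfold gammaDensity
  rw [show -x/θ = -(θ⁻¹*x) from by ring]

lemma gd_nonneg {θ κ : ℝ} (hθ : 0 < θ) (hκ : 0 < κ) {x : ℝ} (hx : 0 ≤ x) :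
    0 ≤ gammaDensity κ θ x := by
  unfold gammaDensity
  have := Real.Gamma_pos_of_pos hκ
  positivity

lemma measurable_gd (θ κ : ℝ) : Measurable (gammaDensity κ θ) := by
  unfold gammaDensity
  fun_prop

lemma integrableOn_rpow_exp {a r : ℝ} (ha : 0 < a) (hr : 0 < r) :
    IntegrableOn (fun x => x ^ (a - 1) * Real.exp (-(r * x))) (Ioi (0:ℝ)) := by
  have h0 := Real.GammaIntegral_convergent ha
  have h1 : IntegrableOn (fun x : ℝ => Real.exp (-(r * x)) * (r * x) ^ (a - 1)) (Ioi 0) := by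
    have := (integrableOn_Ioi_comp_mul_left_iff
      (fun x : ℝ => Real.exp (-x) * x ^ (a - 1)) 0 hr).mpr (by simpa using h0)
    simpa using this
  have h2 : IntegrableOn (fun x : ℝ => ((r:ℝ) ^ (a-1))⁻¹ * (Real.exp (-(r * x)) * (r * x) ^ (a - 1))) (Ioi 0) := h1.const_mul _
  apply IntegrableOn.congr_fun h2 ?_ measurableSet_Ioi
  intro x hx
  simp only
  rw [Real.mul_rpow hr.le (le_of_lt hx)]
  have hrp : (0:ℝ) < r ^ (a - 1) := Real.rpow_pos_of_pos hr _
  field_simp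

lemma integral_rpow_exp {a r : ℝ} (ha : 0 < a) (hr : 0 < r) :
    ∫ x in Ioi (0:ℝ), x ^ (a - 1) * Real.exp (-(r * x)) = (1 / r) ^ a * Real.Gamma a :=
  Real.integral_rpow_mul_exp_neg_mul_Ioi ha hr

lemma integrableOn_gd {θ κ : ℝ} (hθ : 0 < θ) (hκ : 0 < κ) :
    IntegrableOn (gammaDensity κ θ) (Ioi (0:ℝ)) := by
  have h := (integrableOn_rpow_exp hκ (inv_pos.mpr hθ)).div_const (θ ^ κ * Real.Gamma κ)
  apply IntegrableOn.congr_fun h ?_ measurableSet_Ioi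
  intro x _
  simp only
  rw [gd_eq]

lemma integrableOn_mul_gd {θ κ : ℝ} (hθ : 0 < θ) (hκ : 0 < κ) :
    IntegrableOn (fun x => x * gammaDensity κ θ x) (Ioi (0:ℝ)) := by
  have h := (integrableOn_rpow_exp (by linarith : (0:ℝ) < κ + 1) (inv_pos.mpr hθ)).div_const
    (θ ^ κ * Real.Gamma κ)
  apply IntegrableOn.congr_fun h ?_ measurableSet_Ioi
  intro x hx
  have hx : (0:ℝ) < x := hx
  simp only
  rw [gd_eq]
  have hxx : x ^ (κ + 1 - 1) = x * x ^ (κ - 1) := by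
    rw [show κ + 1 - 1 = 1 + (κ - 1) by ring, Real.rpow_add hx, Real.rpow_one]
  rw [hxx]
  ring

lemma integral_gd {θ κ : ℝ} (hθ : 0 < θ) (hκ : 0 < κ) :
    ∫ x in Ioi (0:ℝ), gammaDensity κ θ x = 1 := by
  have h1 : ∫ x in Ioi (0:ℝ), gammaDensity κ θ x
      = (∫ x in Ioi (0:ℝ), x ^ (κ - 1) * Real.exp (-(θ⁻¹ * x))) / (θ ^ κ * Real.Gamma κ) := by
    rw [← integral_div]
    exact setIntegral_congr_fun measurableSet_Ioi fun x _ => gd_eq θ κ x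
  rw [h1, integral_rpow_exp hκ (inv_pos.mpr hθ), one_div, inv_inv]
  have h2 : (0:ℝ) < θ ^ κ * Real.Gamma κ := by
    have := Real.Gamma_pos_of_pos hκ
    positivity
  field_simp

lemma integral_mul_gd {θ κ : ℝ} (hθ : 0 < θ) (hκ : 0 < κ) :
    ∫ x in Ioi (0:ℝ), x * gammaDensity κ θ x = κ * θ := by
  have h1 : ∫ x in Ioi (0:ℝ), x * gammaDensity κ θ x
      = (∫ x in Ioi (0:ℝ), x ^ (κ + 1 - 1) * Real.exp (-(θ⁻¹ * x))) / (θ ^ κ * Real.Gamma κ) := by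
    rw [← integral_div]
    refine setIntegral_congr_fun measurableSet_Ioi fun x hx => ?_
    have hx : (0:ℝ) < x := hx
    rw [gd_eq]
    have hxx : x ^ (κ + 1 - 1) = x * x ^ (κ - 1) := by
      rw [show κ + 1 - 1 = 1 + (κ - 1) by ring, Real.rpow_add hx, Real.rpow_one]
    rw [hxx]
    ring
  rw [h1, integral_rpow_exp (by linarith) (inv_pos.mpr hθ), one_div, inv_inv]
  rw [Real.Gamma_add_one hκ.ne', Real.rpow_add_one hθ.ne']
  have hg := Real.Gamma_pos_of_pos hκ
  have hp : (0:ℝ) < θ ^ κ := Real.rpow_pos_of_pos hθ _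
  field_simp

end GammaChernoffAux
namespace GammaChernoffAux
open Real Filter Topology ENNReal

lemma hasDerivAt_kernel {θ κ : ℝ} (hθ : 0 < θ) (hκ : 0 < κ) {x : ℝ} (hx : 0 < x) :
    HasDerivAt (fun y : ℝ => -θ / (θ ^ κ * Real.Gamma κ) * (y ^ κ * Real.exp (-(θ⁻¹ * y))))
      ((x - κ * θ) * gammaDensity κ θ x) x := by
  set c := θ ^ κ * Real.Gamma κ with hc
  have hc0 : 0 < c := by
    have := Real.Gamma_pos_of_pos hκ
    positivity
  have h1 : HasDerivAt (fun y : ℝ => y ^ κ) (κ * x ^ (κ - 1)) x :=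
    Real.hasDerivAt_rpow_const (Or.inl hx.ne')
  have h2 : HasDerivAt (fun y : ℝ => Real.exp (-(θ⁻¹ * y))) (Real.exp (-(θ⁻¹ * x)) * -θ⁻¹) x := by
    have h3 : HasDerivAt (fun y : ℝ => -(θ⁻¹ * y)) (-θ⁻¹) x := by
      exact ((hasDerivAt_id x).const_mul θ⁻¹).neg.congr_deriv (by simp)
    exact h3.exp
  have h4 := (h1.mul h2).const_mul (-θ / c)
  refine h4.congr_deriv ?_
  rw [gd_eq]
  have hxx : x ^ κ = x ^ (κ - 1) * x := by
    rw [show κ = (κ - 1) + 1 by ring]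
    rw [Real.rpow_add_one hx.ne']
    ring_nf
  rw [hxx]
  field_simp
  ring

lemma kernel_Ioi {θ κ : ℝ} (hθ : 0 < θ) (hκ : 0 < κ) {t : ℝ} (ht : 0 < t) :
    ∫ x in Ioi t, (x - κ * θ) * gammaDensity κ θ x = θ * t * gammaDensity κ θ t := by
  set c := θ ^ κ * Real.Gamma κ with hc
  have hc0 : 0 < c := by
    have := Real.Gamma_pos_of_pos hκ
    positivity
  set g : ℝ → ℝ := fun y => -θ / c * (y ^ κ * Real.exp (-(θ⁻¹ * y))) with hg
  have hderiv : ∀ x ∈ Ioi t, HasDerivAt g ((x - κ * θ) * gammaDensity κ θ x) x :=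
    fun x hx => hasDerivAt_kernel hθ hκ (ht.trans hx)
  have hcont : ContinuousWithinAt g (Ici t) t :=
    (hasDerivAt_kernel hθ hκ ht).continuousAt.continuousWithinAt
  have hint : IntegrableOn (fun x => (x - κ * θ) * gammaDensity κ θ x) (Ioi t) := by
    have hi1 := (integrableOn_mul_gd hθ hκ).mono_set (Ioi_subset_Ioi ht.le)
    have hi2 := ((integrableOn_gd hθ hκ).mono_set (Ioi_subset_Ioi ht.le)).const_mul (κ * θ)
    apply IntegrableOn.congr_fun (hi1.sub hi2) ?_ measurableSet_Ioi
    intro x _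
    simp only [Pi.sub_apply]
    ring
  have htend : Tendsto g atTop (𝓝 0) := by
    have h0 := tendsto_rpow_mul_exp_neg_mul_atTop_nhds_zero κ θ⁻¹ (inv_pos.mpr hθ)
    have h1 : Tendsto (fun y : ℝ => -θ / c * (y ^ κ * Real.exp (-θ⁻¹ * y))) atTop (𝓝 0) := by
      simpa using h0.const_mul (-θ / c)
    apply h1.congr
    intro y
    rw [neg_mul]
  have := integral_Ioi_of_hasDerivAt_of_tendsto hcont hderiv hint htend
  rw [this, hg]
  simp only
  rw [gd_eq]
  have hxx : t ^ κ = t ^ (κ - 1) * t := by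
    rw [show κ = (κ - 1) + 1 by ring, Real.rpow_add_one ht.ne']
    ring_nf
  rw [hxx]
  field_simp
  ring

lemma kernel_Ioc {θ κ : ℝ} (hθ : 0 < θ) (hκ : 0 < κ) {t : ℝ} (ht : 0 < t) :
    ∫ x in Ioc 0 t, (κ * θ - x) * gammaDensity κ θ x = θ * t * gammaDensity κ θ t := by
  have hint : IntegrableOn (fun x => (κ * θ - x) * gammaDensity κ θ x) (Ioi 0) := by
    have hi1 := (integrableOn_gd hθ hκ).const_mul (κ * θ)
    have hi2 := integrableOn_mul_gd hθ hκ
    apply IntegrableOn.congr_fun (hi1.sub hi2) ?_ measurableSet_Ioi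
    intro x _
    simp only [Pi.sub_apply]
    ring
  have key : ∫ x in Ioi (0:ℝ), (κ * θ - x) * gammaDensity κ θ x = 0 := by
    have h1 : ∫ x in Ioi (0:ℝ), (κ * θ - x) * gammaDensity κ θ x
        = (κ * θ) * (∫ x in Ioi (0:ℝ), gammaDensity κ θ x)
          - ∫ x in Ioi (0:ℝ), x * gammaDensity κ θ x := by
      rw [← integral_const_mul, ← integral_sub (((integrableOn_gd hθ hκ)).const_mul _)
        (integrableOn_mul_gd hθ hκ)]
      refine setIntegral_congr_fun measurableSet_Ioi fun x _ => by ring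
    rw [h1, integral_gd hθ hκ, integral_mul_gd hθ hκ]
    ring
  have hsplit : ∫ x in Ioi (0:ℝ), (κ * θ - x) * gammaDensity κ θ x
      = (∫ x in Ioc 0 t, (κ * θ - x) * gammaDensity κ θ x)
        + ∫ x in Ioi t, (κ * θ - x) * gammaDensity κ θ x := by
    rw [← setIntegral_union (Ioc_disjoint_Ioi le_rfl) measurableSet_Ioi
      (hint.mono_set Ioc_subset_Ioi_self) (hint.mono_set (Ioi_subset_Ioi ht.le)),
      Ioc_union_Ioi_eq_Ioi ht.le]
  have hneg : ∫ x in Ioi t, (κ * θ - x) * gammaDensity κ θ x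
      = -(θ * t * gammaDensity κ θ t) := by
    rw [← kernel_Ioi hθ hκ ht, ← integral_neg]
    refine setIntegral_congr_fun measurableSet_Ioi fun x _ => by ring
  rw [key, hneg] at hsplit
  linarith

end GammaChernoffAux
namespace GammaChernoffAux
open Real Filter Topology ENNReal

lemma sq_integral_le {μ : Measure ℝ} [IsFiniteMeasure μ] {f : ℝ → ℝ}
    (hf : Integrable f μ) (hf2 : Integrable (fun x => f x ^ 2) μ) :
    (∫ x, f x ∂μ) ^ 2 ≤ (μ univ).toReal * ∫ x, f x ^ 2 ∂μ := by
  set m := (μ univ).toReal with hm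
  set I := ∫ x, f x ∂μ with hI
  have hm0 : 0 ≤ m := ENNReal.toReal_nonneg
  have h0 : 0 ≤ ∫ x, (m * f x - I) ^ 2 ∂μ := integral_nonneg fun x => sq_nonneg _
  have hexp : ∫ x, (m * f x - I) ^ 2 ∂μ
      = m ^ 2 * (∫ x, f x ^ 2 ∂μ) - 2 * m * I * I + I ^ 2 * m := by
    have heq : (fun x => (m * f x - I) ^ 2)
        = fun x => m ^ 2 * f x ^ 2 - 2 * m * I * f x + I ^ 2 := by
      funext x; ring
    rw [heq]
    have i1 : Integrable (fun x => m ^ 2 * f x ^ 2) μ := hf2.const_mul _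
    have i2 : Integrable (fun x => 2 * m * I * f x) μ := hf.const_mul _
    have i3 : Integrable (fun x => m ^ 2 * f x ^ 2 - 2 * m * I * f x) μ := i1.sub i2
    rw [integral_add i3 (integrable_const _), integral_sub i1 i2, integral_const_mul,
      integral_const_mul, integral_const]
    simp [← hI, ← hm]
    rw [show μ.real univ = m from rfl]
    ring
  rcases eq_or_lt_of_le hm0 with h|h
  · have hμ : μ = 0 := by
      have : μ univ = 0 := by
        have hfin : μ univ ≠ ⊤ := measure_ne_top μ univ
        rw [hm] at h
        exact (ENNReal.toReal_eq_zero_iff _).mp h.symm |>.resolve_right hfin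
      exact Measure.measure_univ_eq_zero.mp this
    simp [hI, hμ]
  · have h2 : 0 ≤ m ^ 2 * (∫ x, f x ^ 2 ∂μ) - m * I ^ 2 := by nlinarith
    nlinarith

lemma pointwise_cs {φ : ℝ → ℝ} (hφ : ContDiff ℝ (⊤ : ℕ∞) φ) (c x : ℝ) :
    (φ x - φ c) ^ 2 ≤ |x - c| * ∫ t in uIoc c x, (deriv φ t) ^ 2 := by
  have hd : Continuous (deriv φ) := hφ.continuous_deriv (by simp)
  have hFTC : ∫ t in c..x, deriv φ t = φ x - φ c :=
    intervalIntegral.integral_deriv_eq_sub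
      (fun t _ => (hφ.differentiable (by simp)).differentiableAt)
      (hd.intervalIntegrable c x)
  have h1 : |φ x - φ c| ≤ ∫ t in uIoc c x, |deriv φ t| := by
    rw [← hFTC]
    simpa [Real.norm_eq_abs] using
      intervalIntegral.norm_integral_le_integral_norm_uIoc (f := deriv φ) (a := c) (b := x)
  have hμ : (volume (uIoc c x)).toReal = |x - c| := by
    rw [uIoc, Real.volume_Ioc, max_sub_min_eq_abs, ENNReal.toReal_ofReal (abs_nonneg _),
      abs_sub_comm]
  have hifm : IsFiniteMeasure (volume.restrict (uIoc c x)) := by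
    rw [uIoc]; infer_instance
  have hint1 : Integrable (fun t => |deriv φ t|) (volume.restrict (uIoc c x)) := by
    rw [uIoc]; exact hd.abs.integrableOn_Ioc
  have hint2 : Integrable (fun t => |deriv φ t| ^ 2) (volume.restrict (uIoc c x)) := by
    rw [uIoc]
    exact (hd.pow 2).abs.integrableOn_Ioc.congr_fun (fun t _ => by
      simp [sq_abs, abs_pow]) measurableSet_Ioc
  have h2 := sq_integral_le (μ := volume.restrict (uIoc c x)) hint1 hint2
  rw [Measure.restrict_apply_univ, hμ] at h2
  have h3 : ∫ t in uIoc c x, |deriv φ t| ^ 2 = ∫ t in uIoc c x, (deriv φ t) ^ 2 :=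
    setIntegral_congr_fun (by rw [uIoc]; exact measurableSet_Ioc) fun t _ => sq_abs _
  have h4 : (φ x - φ c) ^ 2 ≤ (∫ t in uIoc c x, |deriv φ t|) ^ 2 := by
    rw [← sq_abs (φ x - φ c)]
    have hnn : 0 ≤ |φ x - φ c| := abs_nonneg _
    nlinarith [h1]
  calc (φ x - φ c) ^ 2 ≤ (∫ t in uIoc c x, |deriv φ t|) ^ 2 := h4
    _ ≤ |x - c| * ∫ t in uIoc c x, |deriv φ t| ^ 2 := h2
    _ = |x - c| * ∫ t in uIoc c x, (deriv φ t) ^ 2 := by rw [h3]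

end GammaChernoffAux
namespace GammaChernoffAux
open Real Filter Topology ENNReal

noncomputable def Sset (m : ℝ) : Set (ℝ × ℝ) :=
  {z | min m z.1 < z.2 ∧ z.2 ≤ max m z.1}

lemma measurableSet_Sset (m : ℝ) : MeasurableSet (Sset m) := by
  apply MeasurableSet.inter
  · exact measurableSet_lt (measurable_const.min measurable_fst) measurable_snd
  · exact measurableSet_le measurable_snd (measurable_const.max measurable_fst)

lemma mem_Sset_iff_uIoc (m x t : ℝ) : (x, t) ∈ Sset m ↔ t ∈ uIoc m x := Iff.rfl

lemma mem_Sset_right {m t : ℝ} (hm : m < t) : ∀ x : ℝ, ((x, t) ∈ Sset m ↔ x ∈ Ici t) := by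
  intro x
  constructor
  · rintro ⟨h1, h2⟩
    rcases max_choice m x with h | h
    · rw [h] at h2; exact absurd (h2.trans_lt hm) (lt_irrefl _)
    · rw [h] at h2; exact h2
  · intro hx
    have hx' : t ≤ x := hx
    constructor
    · calc min m x ≤ m := min_le_left _ _
        _ < t := hm
    · calc t ≤ x := hx'
        _ ≤ max m x := le_max_right _ _

lemma mem_Sset_left {m t : ℝ} (hm : t ≤ m) : ∀ x : ℝ, ((x, t) ∈ Sset m ↔ x ∈ Iio t) := by
  intro x
  constructor
  · rintro ⟨h1, h2⟩
    rcases min_choice m x with h | h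
    · rw [h] at h1; exact absurd (hm.trans_lt h1) (lt_irrefl _)
    · rw [h] at h1; exact h1
  · intro hx
    have hx' : x < t := hx
    constructor
    · calc min m x ≤ x := min_le_right _ _
        _ < t := hx'
    · calc t ≤ m := hm
        _ ≤ max m x := le_max_left _ _

noncomputable def Fker (θ κ : ℝ) (φ : ℝ → ℝ) : ℝ × ℝ → ℝ≥0∞ := fun z =>
  ENNReal.ofReal (|z.1 - κ * θ| * gammaDensity κ θ z.1) *
    ENNReal.ofReal ((deriv φ z.2) ^ 2) * (Sset (κ * θ)).indicator 1 z

lemma measurable_Fker (θ κ : ℝ) {φ : ℝ → ℝ} (hφ : ContDiff ℝ (⊤ : ℕ∞) φ) :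
    Measurable (Fker θ κ φ) := by
  have hd : Continuous (deriv φ) := hφ.continuous_deriv (by simp)
  apply Measurable.mul
  · apply Measurable.mul (f := fun z : ℝ × ℝ => ENNReal.ofReal (|z.1 - κ * θ| * gammaDensity κ θ z.1))
      (g := fun z : ℝ × ℝ => ENNReal.ofReal ((deriv φ z.2) ^ 2))
    · apply ENNReal.measurable_ofReal.comp
      exact ((measurable_fst.sub measurable_const).abs.mul
        ((measurable_gd θ κ).comp measurable_fst))
    · exact ENNReal.measurable_ofReal.comp ((hd.measurable.comp measurable_snd).pow_const 2)
  · exact measurable_one.indicator (measurableSet_Sset _)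

lemma lintegral_Fker_left {θ κ : ℝ} (hθ : 0 < θ) (hκ : 0 < κ) {φ : ℝ → ℝ}
    (hφ : ContDiff ℝ (⊤ : ℕ∞) φ) {x : ℝ} (hx : 0 < x) :
    ENNReal.ofReal ((φ x - φ (κ * θ)) ^ 2 * gammaDensity κ θ x)
      ≤ ∫⁻ t in Ioi (0:ℝ), Fker θ κ φ (x, t) := by
  have hd : Continuous (deriv φ) := hφ.continuous_deriv (by simp)
  have hμ0 : 0 < κ * θ := mul_pos hκ hθ
  set C := ENNReal.ofReal (|x - κ * θ| * gammaDensity κ θ x) with hC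
  have hCne : C ≠ ⊤ := ENNReal.ofReal_ne_top
  have hsub : uIoc (κ * θ) x ⊆ Ioi 0 := by
    intro t ht
    have h1 : min (κ * θ) x < t := ht.1
    have h2 : (0:ℝ) < min (κ * θ) x := lt_min hμ0 hx
    exact h2.trans h1
  have heq : ∀ t, Fker θ κ φ (x, t)
      = C * (uIoc (κ * θ) x).indicator (fun t => ENNReal.ofReal ((deriv φ t) ^ 2)) t := by
    intro t
    by_cases h : t ∈ uIoc (κ * θ) x
    · rw [Set.indicator_of_mem h]
      unfold Fker
      rw [Set.indicator_of_mem ((mem_Sset_iff_uIoc (κ * θ) x t).mpr h)]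
      simp [hC, mul_comm]
    · rw [Set.indicator_of_notMem h]
      unfold Fker
      rw [Set.indicator_of_notMem (fun hh => h ((mem_Sset_iff_uIoc (κ * θ) x t).mp hh))]
      simp
  calc ENNReal.ofReal ((φ x - φ (κ * θ)) ^ 2 * gammaDensity κ θ x)
      ≤ ENNReal.ofReal (|x - κ * θ| * gammaDensity κ θ x * ∫ t in uIoc (κ * θ) x, (deriv φ t) ^ 2) := by
        apply ENNReal.ofReal_le_ofReal
        have hcs := pointwise_cs hφ (κ * θ) x
        have hp := gd_nonneg hθ hκ hx.le
        calc (φ x - φ (κ * θ)) ^ 2 * gammaDensity κ θ x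
            ≤ (|x - κ * θ| * ∫ t in uIoc (κ * θ) x, (deriv φ t) ^ 2) * gammaDensity κ θ x :=
              mul_le_mul_of_nonneg_right hcs hp
          _ = |x - κ * θ| * gammaDensity κ θ x * ∫ t in uIoc (κ * θ) x, (deriv φ t) ^ 2 := by ring
    _ = C * ENNReal.ofReal (∫ t in uIoc (κ * θ) x, (deriv φ t) ^ 2) := by
        rw [hC, ← ENNReal.ofReal_mul]
        have hp := gd_nonneg hθ hκ hx.le
        positivity
    _ = C * ∫⁻ t in uIoc (κ * θ) x, ENNReal.ofReal ((deriv φ t) ^ 2) := by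
        congr 1
        apply ofReal_integral_eq_lintegral_ofReal
        · rw [uIoc]; exact (hd.pow 2).integrableOn_Ioc
        · exact ae_of_all _ fun t => sq_nonneg _
    _ = ∫⁻ t in Ioi (0:ℝ), C * (uIoc (κ * θ) x).indicator
          (fun t => ENNReal.ofReal ((deriv φ t) ^ 2)) t := by
        rw [lintegral_const_mul' _ _ hCne]
        congr 1
        have hmeas : MeasurableSet (uIoc (κ * θ) x) := by rw [uIoc]; exact measurableSet_Ioc
        rw [lintegral_indicator hmeas, Measure.restrict_restrict hmeas,
          inter_eq_left.mpr hsub]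
    _ = ∫⁻ t in Ioi (0:ℝ), Fker θ κ φ (x, t) := lintegral_congr fun t => (heq t).symm

lemma integrableOn_abs_kernel {θ κ : ℝ} (hθ : 0 < θ) (hκ : 0 < κ) {s : Set ℝ}
    (hs : MeasurableSet s) (hsub : s ⊆ Ioi 0) :
    IntegrableOn (fun x => |x - κ * θ| * gammaDensity κ θ x) s := by
  have h1 : IntegrableOn (fun x => x * gammaDensity κ θ x + (κ * θ) * gammaDensity κ θ x) s := by
    exact ((integrableOn_mul_gd hθ hκ).mono_set hsub).add
      (((integrableOn_gd hθ hκ).mono_set hsub).const_mul (κ * θ))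
  apply Integrable.mono' h1
  · exact ((measurable_id.sub measurable_const).abs.mul (measurable_gd θ κ)).aestronglyMeasurable
  · rw [ae_restrict_iff' hs]
    apply ae_of_all
    intro x hxs
    have hx : (0:ℝ) < x := hsub hxs
    have hp := gd_nonneg hθ hκ hx.le
    have hμ0 : 0 < κ * θ := mul_pos hκ hθ
    have habs : |x - κ * θ| ≤ x + κ * θ := by
      rw [abs_le]
      constructor <;> nlinarith
    rw [Real.norm_eq_abs, abs_mul, abs_of_nonneg hp, abs_abs]
    calc |x - κ * θ| * gammaDensity κ θ x ≤ (x + κ * θ) * gammaDensity κ θ x :=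
        mul_le_mul_of_nonneg_right habs hp
      _ = x * gammaDensity κ θ x + (κ * θ) * gammaDensity κ θ x := by ring

lemma lintegral_Fker_right {θ κ : ℝ} (hθ : 0 < θ) (hκ : 0 < κ) {φ : ℝ → ℝ}
    (hφ : ContDiff ℝ (⊤ : ℕ∞) φ) {t : ℝ} (ht : 0 < t) :
    ∫⁻ x in Ioi (0:ℝ), Fker θ κ φ (x, t)
      = ENNReal.ofReal ((deriv φ t) ^ 2) * ENNReal.ofReal (θ * t * gammaDensity κ θ t) := by
  set D := ENNReal.ofReal ((deriv φ t) ^ 2) with hD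
  have hDne : D ≠ ⊤ := ENNReal.ofReal_ne_top
  set G : ℝ → ℝ≥0∞ := fun x => ENNReal.ofReal (|x - κ * θ| * gammaDensity κ θ x) with hG
  rcases le_or_gt t (κ * θ) with hcase | hcase
  · -- t ≤ κθ : the slice in x is Iio t
    have heq : ∀ x, Fker θ κ φ (x, t) = D * (Iio t).indicator G x := by
      intro x
      by_cases h : x ∈ Iio t
      · rw [Set.indicator_of_mem h]
        unfold Fker
        rw [Set.indicator_of_mem ((mem_Sset_left hcase x).mpr h)]
        simp [hG, hD]
        ring
      · rw [Set.indicator_of_notMem h]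
        unfold Fker
        rw [Set.indicator_of_notMem (fun hh => h ((mem_Sset_left hcase x).mp hh))]
        simp
    rw [lintegral_congr heq, lintegral_const_mul' _ _ hDne]
    congr 1
    rw [lintegral_indicator measurableSet_Iio, Measure.restrict_restrict measurableSet_Iio,
      Iio_inter_Ioi,
      setLIntegral_congr (Ioo_ae_eq_Ioc (μ := volume) (a := (0:ℝ)) (b := t))]
    have hint : IntegrableOn (fun x => |x - κ * θ| * gammaDensity κ θ x) (Ioc 0 t) :=
      integrableOn_abs_kernel hθ hκ measurableSet_Ioc Ioc_subset_Ioi_self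
    rw [hG, ← ofReal_integral_eq_lintegral_ofReal hint]
    · rw [← kernel_Ioc hθ hκ ht]
      congr 1
      apply setIntegral_congr_fun measurableSet_Ioc
      intro x hx
      simp only
      rw [abs_of_nonpos (by linarith [hx.2] : x - κ * θ ≤ 0)]
      ring
    · filter_upwards [ae_restrict_mem measurableSet_Ioc] with x hx
      have := gd_nonneg hθ hκ (le_of_lt hx.1)
      simp only [Pi.zero_apply]
      positivity
  · -- κθ < t : the slice in x is Ici t
    have heq : ∀ x, Fker θ κ φ (x, t) = D * (Ici t).indicator G x := by
      intro x
      by_cases h : x ∈ Ici t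
      · rw [Set.indicator_of_mem h]
        unfold Fker
        rw [Set.indicator_of_mem ((mem_Sset_right hcase x).mpr h)]
        simp [hG, hD]
        ring
      · rw [Set.indicator_of_notMem h]
        unfold Fker
        rw [Set.indicator_of_notMem (fun hh => h ((mem_Sset_right hcase x).mp hh))]
        simp
    rw [lintegral_congr heq, lintegral_const_mul' _ _ hDne]
    congr 1
    have hinter : Ici t ∩ Ioi (0:ℝ) = Ici t :=
      inter_eq_left.mpr fun x hx => lt_of_lt_of_le ht hx
    rw [lintegral_indicator measurableSet_Ici, Measure.restrict_restrict measurableSet_Ici,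
      hinter, setLIntegral_congr (Ioi_ae_eq_Ici (μ := volume) (a := t)).symm]
    have hint : IntegrableOn (fun x => |x - κ * θ| * gammaDensity κ θ x) (Ioi t) :=
      integrableOn_abs_kernel hθ hκ measurableSet_Ioi (Ioi_subset_Ioi ht.le)
    rw [hG, ← ofReal_integral_eq_lintegral_ofReal hint]
    · rw [← kernel_Ioi hθ hκ ht]
      congr 1
      apply setIntegral_congr_fun measurableSet_Ioi
      intro x hx
      simp only
      rw [abs_of_nonneg (by linarith [mem_Ioi.mp hx, hcase] : (0:ℝ) ≤ x - κ * θ)]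
    · filter_upwards [ae_restrict_mem measurableSet_Ioi] with x hx
      have := gd_nonneg hθ hκ (le_of_lt (ht.trans hx))
      simp only [Pi.zero_apply]
      positivity

end GammaChernoffAux
namespace GammaChernoffAux
open Real Filter Topology ENNReal

lemma main_bound {θ κ : ℝ} (hθ : 0 < θ) (hκ : 0 < κ) {φ : ℝ → ℝ} (hφ : ContDiff ℝ (⊤ : ℕ∞) φ)
    (hvar : IntegrableOn (fun x => φ x ^ 2 * gammaDensity κ θ x) (Ioi 0))
    (hrhs : IntegrableOn (fun x => x * (deriv φ x) ^ 2 * gammaDensity κ θ x) (Ioi 0)) :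
    ∫ x in Ioi (0:ℝ), (φ x - φ (κ * θ)) ^ 2 * gammaDensity κ θ x
      ≤ θ * ∫ x in Ioi (0:ℝ), x * (deriv φ x) ^ 2 * gammaDensity κ θ x := by
  set c := φ (κ * θ) with hc
  set R := ∫ x in Ioi (0:ℝ), x * (deriv φ x) ^ 2 * gammaDensity κ θ x with hR
  have hRnn : 0 ≤ R := by
    apply setIntegral_nonneg measurableSet_Ioi
    intro x hx
    have hp := gd_nonneg hθ hκ (le_of_lt hx)
    have hx' : (0:ℝ) < x := hx
    positivity
  have hθR : 0 ≤ θ * R := mul_nonneg hθ.le hRnn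
  -- integrability of φ * p
  have Ip := integrableOn_gd hθ hκ
  have Iφp : IntegrableOn (fun x => φ x * gammaDensity κ θ x) (Ioi 0) := by
    have hbig : IntegrableOn
        (fun x => (1/2) * (φ x ^ 2 * gammaDensity κ θ x + gammaDensity κ θ x)) (Ioi 0) :=
      (hvar.add Ip).const_mul _
    apply Integrable.mono' hbig
    · exact (hφ.continuous.measurable.mul (measurable_gd θ κ)).aestronglyMeasurable
    · filter_upwards [ae_restrict_mem measurableSet_Ioi] with x hx
      have hp := gd_nonneg hθ hκ (le_of_lt hx)
      rw [Real.norm_eq_abs, abs_mul, abs_of_nonneg hp]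
      nlinarith [mul_nonneg (sq_nonneg (|φ x| - 1)) hp, sq_abs (φ x), abs_nonneg (φ x)]
  have Iφcp : IntegrableOn (fun x => (φ x - c) ^ 2 * gammaDensity κ θ x) (Ioi 0) := by
    have i2 : IntegrableOn (fun x => (2 * c) * (φ x * gammaDensity κ θ x)) (Ioi 0) :=
      Iφp.const_mul _
    have i3 : IntegrableOn (fun x => (c ^ 2) * gammaDensity κ θ x) (Ioi 0) := Ip.const_mul _
    apply IntegrableOn.congr_fun ((hvar.sub i2).add i3) ?_ measurableSet_Ioi
    intro x _
    simp only [Pi.add_apply, Pi.sub_apply]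
    ring
  -- pass to lintegrals
  have h0 : ENNReal.ofReal (∫ x in Ioi (0:ℝ), (φ x - c) ^ 2 * gammaDensity κ θ x)
      = ∫⁻ x in Ioi (0:ℝ), ENNReal.ofReal ((φ x - c) ^ 2 * gammaDensity κ θ x) := by
    apply ofReal_integral_eq_lintegral_ofReal Iφcp
    filter_upwards [ae_restrict_mem measurableSet_Ioi] with x hx
    have hp := gd_nonneg hθ hκ (le_of_lt hx)
    positivity
  have h1 : ∫⁻ x in Ioi (0:ℝ), ENNReal.ofReal ((φ x - c) ^ 2 * gammaDensity κ θ x)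
      ≤ ∫⁻ x in Ioi (0:ℝ), ∫⁻ t in Ioi (0:ℝ), Fker θ κ φ (x, t) := by
    apply lintegral_mono_ae
    filter_upwards [ae_restrict_mem measurableSet_Ioi] with x hx
    exact lintegral_Fker_left hθ hκ hφ hx
  have h2 : ∫⁻ x in Ioi (0:ℝ), ∫⁻ t in Ioi (0:ℝ), Fker θ κ φ (x, t)
      = ∫⁻ t in Ioi (0:ℝ), ∫⁻ x in Ioi (0:ℝ), Fker θ κ φ (x, t) := by
    apply lintegral_lintegral_swap
    exact (measurable_Fker θ κ hφ).aemeasurable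
  have h3 : ∫⁻ t in Ioi (0:ℝ), ∫⁻ x in Ioi (0:ℝ), Fker θ κ φ (x, t)
      = ∫⁻ t in Ioi (0:ℝ), ENNReal.ofReal ((deriv φ t) ^ 2 * (θ * t * gammaDensity κ θ t)) := by
    apply setLIntegral_congr_fun_ae measurableSet_Ioi
    apply ae_of_all
    intro t ht
    rw [lintegral_Fker_right hθ hκ hφ ht, ← ENNReal.ofReal_mul (sq_nonneg _)]
  have hRint : IntegrableOn (fun t => (deriv φ t) ^ 2 * (θ * t * gammaDensity κ θ t)) (Ioi 0) := by
    apply IntegrableOn.congr_fun (hrhs.const_mul θ) ?_ measurableSet_Ioi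
    intro x _
    simp only
    ring
  have h4 : ∫⁻ t in Ioi (0:ℝ), ENNReal.ofReal ((deriv φ t) ^ 2 * (θ * t * gammaDensity κ θ t))
      = ENNReal.ofReal (θ * R) := by
    rw [← ofReal_integral_eq_lintegral_ofReal hRint]
    · congr 1
      rw [hR, ← integral_const_mul]
      apply setIntegral_congr_fun measurableSet_Ioi
      intro x _
      simp only
      ring
    · filter_upwards [ae_restrict_mem measurableSet_Ioi] with t ht
      have hp := gd_nonneg hθ hκ (le_of_lt ht)
      have ht' : (0:ℝ) < t := ht
      positivity
  have hchain : ENNReal.ofReal (∫ x in Ioi (0:ℝ), (φ x - c) ^ 2 * gammaDensity κ θ x)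
      ≤ ENNReal.ofReal (θ * R) := by
    rw [h0]
    calc ∫⁻ x in Ioi (0:ℝ), ENNReal.ofReal ((φ x - c) ^ 2 * gammaDensity κ θ x)
        ≤ ∫⁻ x in Ioi (0:ℝ), ∫⁻ t in Ioi (0:ℝ), Fker θ κ φ (x, t) := h1
      _ = ENNReal.ofReal (θ * R) := by rw [h2, h3, h4]
  exact (ENNReal.ofReal_le_ofReal_iff hθR).mp hchain

end GammaChernoffAux

open GammaChernoffAux in
theorem gamma_weighted_chernoff (θ κ : ℝ) (hθ : 0 < θ) (hκ : 0 < κ)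
    (φ : ℝ → ℝ) (hφ : ContDiff ℝ (⊤ : ℕ∞) φ)
    (hvar : IntegrableOn (fun x => φ x ^ 2 * gammaDensity κ θ x) (Ioi 0))
    (hrhs : IntegrableOn (fun x => x * (deriv φ x) ^ 2 * gammaDensity κ θ x) (Ioi 0)) :
    (∫ x in Ioi (0:ℝ), φ x ^ 2 * gammaDensity κ θ x) -
      (∫ x in Ioi (0:ℝ), φ x * gammaDensity κ θ x) ^ 2 ≤
      θ * ∫ x in Ioi (0:ℝ), x * (deriv φ x) ^ 2 * gammaDensity κ θ x := by
  set c := φ (κ * θ) with hc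
  have Ip := integrableOn_gd hθ hκ
  have Iφp : IntegrableOn (fun x => φ x * gammaDensity κ θ x) (Ioi 0) := by
    have hbig : IntegrableOn
        (fun x => (1/2) * (φ x ^ 2 * gammaDensity κ θ x + gammaDensity κ θ x)) (Ioi 0) :=
      (hvar.add Ip).const_mul _
    apply Integrable.mono' hbig
    · exact (hφ.continuous.measurable.mul (measurable_gd θ κ)).aestronglyMeasurable
    · filter_upwards [ae_restrict_mem measurableSet_Ioi] with x hx
      have hp := gd_nonneg hθ hκ (le_of_lt hx)
      rw [Real.norm_eq_abs, abs_mul, abs_of_nonneg hp]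
      nlinarith [mul_nonneg (sq_nonneg (|φ x| - 1)) hp, sq_abs (φ x), abs_nonneg (φ x)]
  have hA : ∫ x in Ioi (0:ℝ), (φ x - c) ^ 2 * gammaDensity κ θ x
      = (∫ x in Ioi (0:ℝ), φ x ^ 2 * gammaDensity κ θ x)
        - 2 * c * (∫ x in Ioi (0:ℝ), φ x * gammaDensity κ θ x) + c ^ 2 := by
    have i2 : IntegrableOn (fun x => (2 * c) * (φ x * gammaDensity κ θ x)) (Ioi 0) :=
      Iφp.const_mul _
    have i3 : IntegrableOn (fun x => (c ^ 2) * gammaDensity κ θ x) (Ioi 0) := Ip.const_mul _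
    have hcongr : ∫ x in Ioi (0:ℝ), (φ x - c) ^ 2 * gammaDensity κ θ x
        = ∫ x in Ioi (0:ℝ), (φ x ^ 2 * gammaDensity κ θ x
            - (2 * c) * (φ x * gammaDensity κ θ x) + (c ^ 2) * gammaDensity κ θ x) := by
      apply setIntegral_congr_fun measurableSet_Ioi
      intro x _
      ring
    have i1 : IntegrableOn (fun x => φ x ^ 2 * gammaDensity κ θ x
        - (2 * c) * (φ x * gammaDensity κ θ x)) (Ioi 0) := hvar.sub i2
    rw [hcongr, integral_add i1 i3, integral_sub hvar i2, integral_const_mul,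
      integral_const_mul, integral_gd hθ hκ]
    ring
  have key := main_bound hθ hκ hφ hvar hrhs
  rw [← hc] at key
  rw [hA] at key
  nlinarith [sq_nonneg ((∫ x in Ioi (0:ℝ), φ x * gammaDensity κ θ x) - c)]
end

section
/- Let Y be a random variable with generalized Gamma density f_∞(·;θ,κ,δ) with 0 < δ ≤ 2. Then for any bounded smooth function ψ, Var[ψ(Y)] ≤ (θ^δ/δ²) E[Y^{2−δ} (ψ'(Y))²]. -/
open MeasureTheory Set Filter
open scoped ENNReal

noncomputable def genGammaDensity (θ κ δ x : ℝ) : ℝ :=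
  (δ / θ ^ κ) * (1 / Real.Gamma (κ / δ)) * x ^ (κ - 1) * Real.exp (-(x / θ) ^ δ)



section Aux
variable {θ κ δ : ℝ}

lemma ggd_measurable : Measurable (genGammaDensity θ κ δ) := by
  unfold genGammaDensity
  fun_prop

lemma ggd_pos (hθ : 0 < θ) (hκ : 0 < κ) (hδ0 : 0 < δ) {x : ℝ} (hx : 0 < x) :
    0 < genGammaDensity θ κ δ x := by
  unfold genGammaDensity
  have h1 : 0 < δ / θ ^ κ := div_pos hδ0 (Real.rpow_pos_of_pos hθ κ)
  have h2 : 0 < Real.Gamma (κ / δ) := Real.Gamma_pos_of_pos (div_pos hκ hδ0)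
  positivity

lemma ggd_nonneg (hθ : 0 < θ) (hκ : 0 < κ) (hδ0 : 0 < δ) {x : ℝ} (hx : 0 < x) :
    0 ≤ genGammaDensity θ κ δ x := (ggd_pos hθ hκ hδ0 hx).le

lemma ggd_eq (hθ : 0 < θ) {x : ℝ} (hx : 0 < x) :
    genGammaDensity θ κ δ x =
      ((δ / θ ^ κ) * (1 / Real.Gamma (κ / δ))) *
        (x ^ (κ - 1) * Real.exp (-((θ ^ δ)⁻¹ * x ^ δ))) := by
  unfold genGammaDensity
  rw [Real.div_rpow hx.le hθ.le]
  ring_nf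

lemma ggd_continuousAt (hδ0 : 0 < δ) {x : ℝ} (hx : 0 < x) :
    ContinuousAt (genGammaDensity θ κ δ) x := by
  unfold genGammaDensity
  have h1 : ContinuousAt (fun y : ℝ => y ^ (κ - 1)) x :=
    Real.continuousAt_rpow_const x _ (Or.inl hx.ne')
  have h2 : ContinuousAt (fun y : ℝ => (y / θ) ^ δ) x := by
    apply ContinuousAt.comp (g := fun z : ℝ => z ^ δ)
    · exact Real.continuousAt_rpow_const _ _ (Or.inr hδ0.le)
    · fun_prop
  exact (continuousAt_const.mul h1).mul ((h2.neg).rexp)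
end Aux

section M3
variable {θ κ δ : ℝ}

lemma aux_int_pos {p q b : ℝ} (hp : 0 < p) (hq : -1 < q) (hb : 0 < b) :
    0 < ∫ x in Ioi (0:ℝ), x ^ q * Real.exp (-b * x ^ p) := by
  rw [integral_rpow_mul_exp_neg_mul_rpow hp hq hb]
  have h1 := Real.Gamma_pos_of_pos (div_pos (by linarith : (0:ℝ) < q + 1) hp)
  have h2 : (0:ℝ) < b ^ (-(q + 1) / p) := Real.rpow_pos_of_pos hb _
  have h3 : (0:ℝ) < 1 / p := by positivity
  positivity

lemma aux_integrableOn {p q b : ℝ} (hp : 0 < p) (hq : -1 < q) (hb : 0 < b) :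
    IntegrableOn (fun x => x ^ q * Real.exp (-b * x ^ p)) (Ioi (0:ℝ)) := by
  by_contra h
  have h0 := integral_undef (μ := volume.restrict (Ioi (0:ℝ))) h
  have h1 := aux_int_pos hp hq hb
  rw [h0] at h1
  exact lt_irrefl _ h1


lemma ggd_mul_eq (hθ : 0 < θ) (t : ℝ) {x : ℝ} (hx : x ∈ Ioi (0:ℝ)) :
    x ^ t * genGammaDensity θ κ δ x =
      ((δ / θ ^ κ) * (1 / Real.Gamma (κ / δ))) *
        (x ^ (t + κ - 1) * Real.exp (-(θ ^ δ)⁻¹ * x ^ δ)) := by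
  have hx0 : (0:ℝ) < x := hx
  unfold genGammaDensity
  rw [Real.div_rpow hx0.le hθ.le, show t + κ - 1 = t + (κ - 1) by ring,
    Real.rpow_add hx0, div_eq_inv_mul (x ^ δ) (θ ^ δ)]
  ring

lemma ggd_moment_integrableOn (hθ : 0 < θ) (hκ : 0 < κ) (hδ0 : 0 < δ) {t : ℝ} (ht : -κ < t) :
    IntegrableOn (fun x => x ^ t * genGammaDensity θ κ δ x) (Ioi (0:ℝ)) := by
  have hb : (0:ℝ) < (θ ^ δ)⁻¹ := inv_pos.mpr (Real.rpow_pos_of_pos hθ δ)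
  have h := (aux_integrableOn hδ0 (by linarith : (-1:ℝ) < t + κ - 1) hb).const_mul
    ((δ / θ ^ κ) * (1 / Real.Gamma (κ / δ)))
  exact IntegrableOn.congr_fun h (fun x hx => (ggd_mul_eq hθ t hx).symm) measurableSet_Ioi

lemma ggd_moment_eq (hθ : 0 < θ) (hκ : 0 < κ) (hδ0 : 0 < δ) {t : ℝ} (ht : -κ < t) :
    ∫ x in Ioi (0:ℝ), x ^ t * genGammaDensity θ κ δ x =
      θ ^ t * Real.Gamma ((κ + t) / δ) / Real.Gamma (κ / δ) := by
  have hb : (0:ℝ) < (θ ^ δ)⁻¹ := inv_pos.mpr (Real.rpow_pos_of_pos hθ δ)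
  rw [setIntegral_congr_fun measurableSet_Ioi (fun x hx => ggd_mul_eq hθ t hx)]
  rw [integral_const_mul,
    integral_rpow_mul_exp_neg_mul_rpow hδ0 (by linarith : (-1:ℝ) < t + κ - 1) hb]
  have h1 : ((θ ^ δ)⁻¹ : ℝ) ^ (-(t + κ - 1 + 1) / δ) = θ ^ (t + κ) := by
    rw [Real.inv_rpow (Real.rpow_nonneg hθ.le δ), ← Real.rpow_mul hθ.le,
      ← Real.rpow_neg hθ.le]
    congr 1
    field_simp
    ring
  rw [h1]
  have h2 : (t + κ - 1 + 1) / δ = (κ + t) / δ := by ring_nf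
  rw [h2]
  have h3 : θ ^ (t + κ) = θ ^ t * θ ^ κ := Real.rpow_add hθ _ _
  have h4 : (θ:ℝ) ^ κ ≠ 0 := (Real.rpow_pos_of_pos hθ κ).ne'
  have h5 : Real.Gamma (κ / δ) ≠ 0 := (Real.Gamma_pos_of_pos (div_pos hκ hδ0)).ne'
  rw [h3]
  field_simp
end M3

section M4
variable {θ κ δ : ℝ}


lemma ggd_integrableOn (hθ : 0 < θ) (hκ : 0 < κ) (hδ0 : 0 < δ) :
    IntegrableOn (genGammaDensity θ κ δ) (Ioi (0:ℝ)) := by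
  have h := ggd_moment_integrableOn hθ hκ hδ0 (t := 0) (by linarith)
  exact IntegrableOn.congr_fun h
    (fun x hx => by rw [Real.rpow_zero, one_mul]) measurableSet_Ioi

lemma ggd_mass (hθ : 0 < θ) (hκ : 0 < κ) (hδ0 : 0 < δ) :
    ∫ x in Ioi (0:ℝ), genGammaDensity θ κ δ x = 1 := by
  have h := ggd_moment_eq hθ hκ hδ0 (t := 0) (by linarith)
  rw [setIntegral_congr_fun measurableSet_Ioi
    (fun x (hx : x ∈ Ioi (0:ℝ)) => (by rw [Real.rpow_zero, one_mul] :
      genGammaDensity θ κ δ x = x ^ (0:ℝ) * genGammaDensity θ κ δ x)), h,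
    Real.rpow_zero, add_zero, one_mul,
    div_self (Real.Gamma_pos_of_pos (div_pos hκ hδ0)).ne']

lemma ggd_momentδ (hθ : 0 < θ) (hκ : 0 < κ) (hδ0 : 0 < δ) :
    ∫ x in Ioi (0:ℝ), x ^ δ * genGammaDensity θ κ δ x = θ ^ δ * (κ / δ) := by
  have h := ggd_moment_eq hθ hκ hδ0 (t := δ) (by linarith)
  rw [h, show (κ + δ) / δ = κ / δ + 1 by field_simp,
    Real.Gamma_add_one (div_pos hκ hδ0).ne']
  have h5 : Real.Gamma (κ / δ) ≠ 0 := (Real.Gamma_pos_of_pos (div_pos hκ hδ0)).ne'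
  field_simp
end M4

section M5
variable {θ κ δ : ℝ}

lemma ggd_hasDerivAt (hθ : 0 < θ) (hκ : 0 < κ) (hδ0 : 0 < δ) {x : ℝ} (hx : 0 < x) :
    HasDerivAt (genGammaDensity θ κ δ)
      (genGammaDensity θ κ δ x * ((κ - 1) / x - δ * x ^ (δ - 1) / θ ^ δ)) x := by
  have hxθ : (0:ℝ) < x / θ := div_pos hx hθ
  have h1 : HasDerivAt (fun y : ℝ => y ^ (κ - 1)) ((κ - 1) * x ^ (κ - 1 - 1)) x :=
    Real.hasDerivAt_rpow_const (Or.inl hx.ne')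
  have h2 : HasDerivAt (fun y : ℝ => (y / θ) ^ δ) ((δ * (x / θ) ^ (δ - 1)) * (1 / θ)) x := by
    have hin : HasDerivAt (fun y : ℝ => y / θ) (1 / θ) x := by
      simpa using (hasDerivAt_id x).div_const θ
    exact (Real.hasDerivAt_rpow_const (p := δ) (Or.inl hxθ.ne')).comp x hin
  have h3 : HasDerivAt (fun y : ℝ => Real.exp (-(y / θ) ^ δ))
      (Real.exp (-(x / θ) ^ δ) * -((δ * (x / θ) ^ (δ - 1)) * (1 / θ))) x :=
    (Real.hasDerivAt_exp _).comp x h2.neg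
  have h4 := ((h1.const_mul ((δ / θ ^ κ) * (1 / Real.Gamma (κ / δ)))).mul h3)
  have heq : genGammaDensity θ κ δ =
      fun y => (δ / θ ^ κ) * (1 / Real.Gamma (κ / δ)) * y ^ (κ - 1) *
        Real.exp (-(y / θ) ^ δ) := rfl
  rw [heq]
  refine h4.congr_deriv ?_
  have e1 : (x / θ) ^ (δ - 1) = x ^ (δ - 1) / θ ^ (δ - 1) := Real.div_rpow hx.le hθ.le (δ - 1)
  have e2 : (θ:ℝ) ^ (δ - 1) = θ ^ δ / θ := by
    rw [Real.rpow_sub hθ, Real.rpow_one]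
  have e3 : x ^ (κ - 1 - 1) = x ^ (κ - 1) / x := by
    rw [Real.rpow_sub hx, Real.rpow_one]
  have hθ0 : (θ:ℝ) ≠ 0 := hθ.ne'
  have hθδ : (θ:ℝ) ^ δ ≠ 0 := (Real.rpow_pos_of_pos hθ δ).ne'
  have hθκ : (θ:ℝ) ^ κ ≠ 0 := (Real.rpow_pos_of_pos hθ κ).ne'
  have hΓ : Real.Gamma (κ / δ) ≠ 0 := (Real.Gamma_pos_of_pos (div_pos hκ hδ0)).ne'
  rw [e1, e2, e3]
  simp only
  field_simp
  ring

end M5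


section FTC
variable {f : ℝ → ℝ}

lemma hasDerivAt_head (hf_int : IntegrableOn f (Ioi (0:ℝ)))
    (hf_meas : Measurable f) {x : ℝ} (hx : 0 < x) (hf_cont : ContinuousAt f x) :
    HasDerivAt (fun r => ∫ t in Ioo (0:ℝ) r, f t) (f x) x := by
  have hII : IntervalIntegrable f volume 0 x := by
    rw [intervalIntegrable_iff_integrableOn_Ioc_of_le hx.le]
    exact hf_int.mono_set Ioc_subset_Ioi_self
  have hprim : HasDerivAt (fun u => ∫ t in (0:ℝ)..u, f t) (f x) x :=
    intervalIntegral.integral_hasDerivAt_right hII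
      ⟨univ, Filter.univ_mem, by simpa using hf_meas.aestronglyMeasurable⟩ hf_cont
  apply hprim.congr_of_eventuallyEq
  filter_upwards [Ioi_mem_nhds hx] with u (hu : 0 < u)
  rw [intervalIntegral.integral_of_le hu.le, integral_Ioc_eq_integral_Ioo]

lemma eq_sub_head (hf_int : IntegrableOn f (Ioi (0:ℝ))) {u : ℝ} (hu : 0 < u) :
    ∫ s in Ioi u, f s = (∫ s in Ioi (0:ℝ), f s) - ∫ t in Ioo (0:ℝ) u, f t := by
  have hsplit : Ioc 0 u ∪ Ioi u = Ioi (0:ℝ) := Ioc_union_Ioi_eq_Ioi hu.le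
  have h := setIntegral_union (f := f) (μ := volume) Ioc_disjoint_Ioi_same measurableSet_Ioi
    (hf_int.mono_set Ioc_subset_Ioi_self) (hf_int.mono_set (Ioi_subset_Ioi hu.le))
  rw [hsplit] at h
  rw [h, integral_Ioc_eq_integral_Ioo]
  ring

lemma hasDerivAt_tail (hf_int : IntegrableOn f (Ioi (0:ℝ)))
    (hf_meas : Measurable f) {x : ℝ} (hx : 0 < x) (hf_cont : ContinuousAt f x) :
    HasDerivAt (fun r => ∫ s in Ioi r, f s) (-f x) x := by
  have h := (hasDerivAt_const (𝕜 := ℝ) x (∫ s in Ioi (0:ℝ), f s)).sub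
    (hasDerivAt_head hf_int hf_meas hx hf_cont)
  have h2 : (fun r => (∫ s in Ioi (0:ℝ), f s) - ∫ t in Ioo (0:ℝ) r, f t)
      =ᶠ[nhds x] fun r => ∫ s in Ioi r, f s := by
    filter_upwards [Ioi_mem_nhds hx] with u (hu : 0 < u)
    rw [eq_sub_head hf_int hu]
  simpa using HasDerivAt.congr_of_eventuallyEq h h2.symm

lemma tendsto_head_zero (hf_int : IntegrableOn f (Ioi (0:ℝ))) :
    Filter.Tendsto (fun r => ∫ t in Ioo (0:ℝ) r, f t) (nhdsWithin 0 (Ioi 0)) (nhds 0) := by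
  set f₀ := (Ioi (0:ℝ)).indicator f with hf₀def
  have hf₀ : Integrable f₀ := (integrable_indicator_iff measurableSet_Ioi).mpr hf_int
  have hcont : Continuous (fun u => ∫ t in (0:ℝ)..u, f₀ t) :=
    intervalIntegral.continuous_primitive (fun a b => hf₀.intervalIntegrable) 0
  have h0 : (∫ t in (0:ℝ)..(0:ℝ), f₀ t) = 0 := intervalIntegral.integral_same
  have htend : Filter.Tendsto (fun u => ∫ t in (0:ℝ)..u, f₀ t) (nhdsWithin 0 (Ioi 0)) (nhds 0) := by
    have := (hcont.tendsto 0).mono_left (nhdsWithin_le_nhds (s := Ioi (0:ℝ)))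
    rwa [h0] at this
  apply htend.congr'
  filter_upwards [self_mem_nhdsWithin] with u (hu : 0 < u)
  rw [intervalIntegral.integral_of_le hu.le, integral_Ioc_eq_integral_Ioo]
  refine setIntegral_congr_fun measurableSet_Ioo (fun t ht => ?_)
  exact indicator_of_mem (mem_of_mem_of_subset ht Ioo_subset_Ioi_self) f
end FTC



section KEY
variable {θ κ δ : ℝ}


lemma ggd_combo_hasDerivAt (hθ : 0 < θ) (hκ : 0 < κ) (hδ0 : 0 < δ) {x : ℝ} (hx : 0 < x) :
    HasDerivAt (fun r => (θ ^ δ / δ) * (r * genGammaDensity θ κ δ r))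
      (genGammaDensity θ κ δ x * (θ ^ δ * (κ / δ) - x ^ δ)) x := by
  have h := ((hasDerivAt_id x).mul (ggd_hasDerivAt hθ hκ hδ0 hx)).const_mul (θ ^ δ / δ)
  refine h.congr_deriv ?_
  have e4 : x ^ (δ - 1) = x ^ δ / x := by rw [Real.rpow_sub hx, Real.rpow_one]
  have hθδ : (θ:ℝ) ^ δ ≠ 0 := (Real.rpow_pos_of_pos hθ δ).ne'
  rw [e4]
  simp only [id_eq]
  field_simp
  ring

lemma ggd_xmul_meas : Measurable (fun t : ℝ => t ^ δ * genGammaDensity θ κ δ t) := by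
  have := ggd_measurable (θ := θ) (κ := κ) (δ := δ)
  fun_prop

lemma ggd_xmul_cont (hδ0 : 0 < δ) {x : ℝ} (hx : 0 < x) :
    ContinuousAt (fun t : ℝ => t ^ δ * genGammaDensity θ κ δ t) x :=
  (Real.continuousAt_rpow_const x δ (Or.inl hx.ne')).mul (ggd_continuousAt hδ0 hx)

lemma ggd_xmul_int (hθ : 0 < θ) (hκ : 0 < κ) (hδ0 : 0 < δ) :
    IntegrableOn (fun t : ℝ => t ^ δ * genGammaDensity θ κ δ t) (Ioi (0:ℝ)) :=
  ggd_moment_integrableOn hθ hκ hδ0 (by linarith)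

lemma ggd_rmul_tendsto (hθ : 0 < θ) (hκ : 0 < κ) (hδ0 : 0 < δ) :
    Tendsto (fun u => u * genGammaDensity θ κ δ u) (nhdsWithin 0 (Ioi 0)) (nhds 0) := by
  have h1 : Tendsto (fun u : ℝ => u ^ κ) (nhds 0) (nhds 0) := by
    have := (Real.continuousAt_rpow_const 0 κ (Or.inr hκ.le)).tendsto
    rwa [Real.zero_rpow hκ.ne'] at this
  have h2 : Tendsto (fun u : ℝ => Real.exp (-(u / θ) ^ δ)) (nhds 0) (nhds 1) := by
    have hc : ContinuousAt (fun u : ℝ => Real.exp (-(u / θ) ^ δ)) 0 := by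
      apply ContinuousAt.rexp
      apply ContinuousAt.neg
      exact (Real.continuousAt_rpow_const _ δ (Or.inr hδ0.le)).comp
        ((continuousAt_id.div_const θ) : ContinuousAt (fun u : ℝ => u / θ) 0)
    have := hc.tendsto
    simpa [Real.zero_rpow hδ0.ne'] using this
  have h3 : Tendsto (fun u : ℝ =>
      ((δ / θ ^ κ) * (1 / Real.Gamma (κ / δ))) * (u ^ κ * Real.exp (-(u / θ) ^ δ)))
      (nhds 0) (nhds 0) := by
    have := ((h1.mul h2).const_mul ((δ / θ ^ κ) * (1 / Real.Gamma (κ / δ))))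
    simpa using this
  apply (h3.mono_left nhdsWithin_le_nhds).congr'
  filter_upwards [self_mem_nhdsWithin] with u (hu : 0 < u)
  unfold genGammaDensity
  have e : u ^ κ = u ^ (κ - 1) * u := by
    rw [Real.rpow_sub hu, Real.rpow_one]; field_simp
  rw [e]; ring

lemma ggd_key (hθ : 0 < θ) (hκ : 0 < κ) (hδ0 : 0 < δ) {r : ℝ} (hr : 0 < r) :
    (∫ t in Ioo (0:ℝ) r, genGammaDensity θ κ δ t) *
        (∫ s in Ioi r, s ^ δ * genGammaDensity θ κ δ s) -
      (∫ s in Ioi r, genGammaDensity θ κ δ s) *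
        (∫ t in Ioo (0:ℝ) r, t ^ δ * genGammaDensity θ κ δ t) =
      (θ ^ δ / δ) * (r * genGammaDensity θ κ δ r) := by
  set P := genGammaDensity θ κ δ with hP
  set hf : ℝ → ℝ := fun t => t ^ δ * P t with hhf
  set Φ : ℝ → ℝ := fun u => (∫ t in Ioo (0:ℝ) u, P t) * (∫ s in Ioi u, hf s) -
    (∫ s in Ioi u, P s) * (∫ t in Ioo (0:ℝ) u, hf t) - (θ ^ δ / δ) * (u * P u) with hΦdef
  have hPint := ggd_integrableOn hθ hκ hδ0
  have hhfint := ggd_xmul_int hθ hκ hδ0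
  have hderiv : ∀ x ∈ Ioi (0:ℝ), HasDerivAt Φ 0 x := by
    intro x (hx : 0 < x)
    have hF := hasDerivAt_head hPint ggd_measurable hx (ggd_continuousAt hδ0 hx)
    have hB := hasDerivAt_head hhfint ggd_xmul_meas hx (ggd_xmul_cont hδ0 hx)
    have hG := hasDerivAt_tail hPint ggd_measurable hx (ggd_continuousAt hδ0 hx)
    have hA := hasDerivAt_tail hhfint ggd_xmul_meas hx (ggd_xmul_cont hδ0 hx)
    have hRP := ggd_combo_hasDerivAt hθ hκ hδ0 hx
    have h := ((hF.mul hA).sub (hG.mul hB)).sub hRP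
    refine h.congr_deriv ?_
    have eA : (∫ s in Ioi x, hf s) = θ ^ δ * (κ / δ) - ∫ t in Ioo (0:ℝ) x, hf t := by
      rw [eq_sub_head hhfint hx, ggd_momentδ hθ hκ hδ0]
    have eG : (∫ s in Ioi x, P s) = 1 - ∫ t in Ioo (0:ℝ) x, P t := by
      rw [eq_sub_head hPint hx, ggd_mass hθ hκ hδ0]
    rw [eA, eG, hhf]
    simp only
    ring
  have hconst : ∀ x, 0 < x → x ≤ r → Φ r = Φ x := by
    intro x hx hxr
    have hcont : ContinuousOn Φ (Icc x r) := fun y hy =>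
      (hderiv y (lt_of_lt_of_le hx hy.1)).continuousAt.continuousWithinAt
    have hd : ∀ y ∈ Ico x r, HasDerivWithinAt Φ 0 (Ici y) y := fun y hy =>
      (hderiv y (lt_of_lt_of_le hx hy.1)).hasDerivWithinAt
    exact constant_of_has_deriv_right_zero hcont hd r (right_mem_Icc.mpr hxr)
  have hlim : Tendsto Φ (nhdsWithin 0 (Ioi 0)) (nhds 0) := by
    have hFt := tendsto_head_zero hPint
    have hBt := tendsto_head_zero hhfint
    have hGt : Tendsto (fun u => ∫ s in Ioi u, P s) (nhdsWithin 0 (Ioi 0)) (nhds 1) := by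
      have : Tendsto (fun u => (∫ s in Ioi (0:ℝ), P s) - ∫ t in Ioo (0:ℝ) u, P t)
          (nhdsWithin 0 (Ioi 0)) (nhds ((∫ s in Ioi (0:ℝ), P s) - 0)) :=
        tendsto_const_nhds.sub hFt
      rw [ggd_mass hθ hκ hδ0, sub_zero] at this
      apply this.congr'
      filter_upwards [self_mem_nhdsWithin] with u (hu : 0 < u)
      rw [eq_sub_head hPint hu, ggd_mass hθ hκ hδ0]
    have hAt : Tendsto (fun u => ∫ s in Ioi u, hf s) (nhdsWithin 0 (Ioi 0))
        (nhds (θ ^ δ * (κ / δ))) := by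
      have : Tendsto (fun u => (∫ s in Ioi (0:ℝ), hf s) - ∫ t in Ioo (0:ℝ) u, hf t)
          (nhdsWithin 0 (Ioi 0)) (nhds ((∫ s in Ioi (0:ℝ), hf s) - 0)) :=
        tendsto_const_nhds.sub hBt
      rw [ggd_momentδ hθ hκ hδ0, sub_zero] at this
      apply this.congr'
      filter_upwards [self_mem_nhdsWithin] with u (hu : 0 < u)
      rw [eq_sub_head hhfint hu, ggd_momentδ hθ hκ hδ0]
    have hrp := ggd_rmul_tendsto hθ hκ hδ0
    have := ((hFt.mul hAt).sub (hGt.mul hBt)).sub (hrp.const_mul (θ ^ δ / δ))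
    simpa using this
  have hlim2 : Tendsto Φ (nhdsWithin 0 (Ioi 0)) (nhds (Φ r)) := by
    apply tendsto_const_nhds.congr'
    filter_upwards [Ioc_mem_nhdsGT_of_mem (by constructor <;> [exact le_rfl; exact hr])]
      with x hx
    exact hconst x hx.1 hx.2
  have hzero : Φ r = 0 := tendsto_nhds_unique hlim2 hlim
  simp only [hΦdef, hhf, hP] at hzero
  linarith
end KEY


lemma integral_cs {α : Type*} [MeasurableSpace α] {μ : Measure α} {f g : α → ℝ}
    (hf2 : Integrable (fun x => f x ^ 2) μ) (hg2 : Integrable (fun x => g x ^ 2) μ)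
    (hfg : Integrable (fun x => f x * g x) μ) :
    (∫ x, f x * g x ∂μ) ^ 2 ≤ (∫ x, f x ^ 2 ∂μ) * ∫ x, g x ^ 2 ∂μ := by
  set F := ∫ x, f x ^ 2 ∂μ
  set G := ∫ x, g x ^ 2 ∂μ
  set S := ∫ x, f x * g x ∂μ
  have key : ∀ c : ℝ, 0 ≤ F * (c * c) + (2 * S) * c + G := by
    intro c
    have h0 : 0 ≤ ∫ x, (c * f x + g x) ^ 2 ∂μ := integral_nonneg fun x => sq_nonneg _
    have hexp : ∫ x, (c * f x + g x) ^ 2 ∂μ = c ^ 2 * F + (2 * c) * S + G := by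
      have heq : (fun x => (c * f x + g x) ^ 2) =
          fun x => (c ^ 2 * f x ^ 2 + (2 * c) * (f x * g x)) + g x ^ 2 :=
        funext fun x => by ring
      have hA : Integrable (fun x => c ^ 2 * f x ^ 2 + 2 * c * (f x * g x)) μ :=
        (hf2.const_mul (c ^ 2)).add (hfg.const_mul (2 * c))
      rw [heq, integral_add hA hg2, integral_add (hf2.const_mul (c ^ 2)) (hfg.const_mul (2 * c)),
        MeasureTheory.integral_const_mul, MeasureTheory.integral_const_mul]
    nlinarith [h0, hexp]
  have hd := discrim_le_zero key
  rw [discrim] at hd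
  nlinarith [hd]

lemma cont_rpow_on {a b e : ℝ} (ha : 0 < a) :
    ContinuousOn (fun r : ℝ => r ^ e) (Icc a b) := fun r hr =>
  (Real.continuousAt_rpow_const r e (Or.inl (lt_of_lt_of_le ha hr.1).ne')).continuousWithinAt

lemma ftc_cs_bound {ψ : ℝ → ℝ} (hψ : ContDiff ℝ (⊤ : ℕ∞) ψ) {δ : ℝ} (hδ0 : 0 < δ)
    {t s : ℝ} (ht : 0 < t) (hts : t ≤ s) :
    (ψ s - ψ t) ^ 2 ≤ ((s ^ δ - t ^ δ) / δ) *
      ∫ r in Ioc t s, (deriv ψ r) ^ 2 * r ^ (1 - δ) := by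
  have hψd : Differentiable ℝ ψ := hψ.differentiable (by simp)
  have hψc : Continuous (deriv ψ) := hψ.continuous_deriv (by simp)
  have hftc : ψ s - ψ t = ∫ r in Ioc t s, deriv ψ r := by
    rw [← intervalIntegral.integral_of_le hts,
      intervalIntegral.integral_deriv_eq_sub (fun x _ => hψd x)
        (hψc.intervalIntegrable t s)]
  -- Cauchy-Schwarz on Ioc t s
  set μ' := volume.restrict (Ioc t s) with hμ'
  have hfg : ∀ r ∈ Ioc t s, r ^ ((δ - 1) / 2) * (deriv ψ r * r ^ ((1 - δ) / 2)) = deriv ψ r := by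
    intro r hr
    have hr0 : 0 < r := lt_of_lt_of_le ht hr.1.le
    rw [mul_comm (deriv ψ r), ← mul_assoc, ← Real.rpow_add hr0,
      show (δ - 1) / 2 + (1 - δ) / 2 = 0 by ring, Real.rpow_zero, one_mul]
  have hint1 : IntegrableOn (fun r : ℝ => (r ^ ((δ - 1) / 2)) ^ 2) (Ioc t s) :=
    (((cont_rpow_on (e := (δ - 1) / 2) ht).pow 2).integrableOn_Icc).mono_set Ioc_subset_Icc_self
  have hint2 : IntegrableOn (fun r : ℝ => (deriv ψ r * r ^ ((1 - δ) / 2)) ^ 2) (Ioc t s) :=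
    ((((hψc.continuousOn).mul (cont_rpow_on (e := (1 - δ) / 2) ht)).pow 2).integrableOn_Icc).mono_set
      Ioc_subset_Icc_self
  have hint3 : IntegrableOn
      (fun r : ℝ => r ^ ((δ - 1) / 2) * (deriv ψ r * r ^ ((1 - δ) / 2))) (Ioc t s) :=
    (((cont_rpow_on (e := (δ - 1) / 2) ht).mul
      ((hψc.continuousOn).mul (cont_rpow_on (e := (1 - δ) / 2) ht))).integrableOn_Icc).mono_set
      Ioc_subset_Icc_self
  have hcs := integral_cs (μ := μ') hint1 hint2 hint3
  have e1 : (∫ r, r ^ ((δ - 1) / 2) * (deriv ψ r * r ^ ((1 - δ) / 2)) ∂μ') =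
      ∫ r in Ioc t s, deriv ψ r := setIntegral_congr_fun measurableSet_Ioc hfg
  have e2 : (∫ r, (r ^ ((δ - 1) / 2)) ^ 2 ∂μ') = (s ^ δ - t ^ δ) / δ := by
    have e2a : ∀ r ∈ Ioc t s, (r ^ ((δ - 1) / 2)) ^ 2 = r ^ (δ - 1) := by
      intro r hr
      have hr0 : 0 < r := lt_of_lt_of_le ht hr.1.le
      rw [← Real.rpow_natCast (r ^ ((δ - 1) / 2)) 2, ← Real.rpow_mul hr0.le]
      norm_num
    rw [setIntegral_congr_fun measurableSet_Ioc e2a, ← intervalIntegral.integral_of_le hts,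
      integral_rpow (Or.inl (by linarith : (-1:ℝ) < δ - 1)),
      show δ - 1 + 1 = δ by ring]
  have e3 : (∫ r, (deriv ψ r * r ^ ((1 - δ) / 2)) ^ 2 ∂μ') =
      ∫ r in Ioc t s, (deriv ψ r) ^ 2 * r ^ (1 - δ) := by
    refine setIntegral_congr_fun measurableSet_Ioc (fun r hr => ?_)
    have hr0 : 0 < r := lt_of_lt_of_le ht hr.1.le
    rw [mul_pow, ← Real.rpow_natCast (r ^ ((1 - δ) / 2)) 2, ← Real.rpow_mul hr0.le]
    norm_num
  rw [e1, e2, e3] at hcs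
  rw [hftc]
  exact hcs


lemma variance_double {P ψ : ℝ → ℝ} (hPint : IntegrableOn P (Ioi 0))
    (hPmass : ∫ x in Ioi (0:ℝ), P x = 1)
    (hψc : Continuous ψ) {C : ℝ} (hC : ∀ x, |ψ x| ≤ C) :
    2 * ((∫ x in Ioi (0:ℝ), ψ x ^ 2 * P x) - (∫ x in Ioi (0:ℝ), ψ x * P x) ^ 2) =
      ∫ z, (ψ z.1 - ψ z.2) ^ 2 * (P z.1 * P z.2)
        ∂((volume.restrict (Ioi (0:ℝ))).prod (volume.restrict (Ioi (0:ℝ)))) := by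
  set μ0 := volume.restrict (Ioi (0:ℝ)) with hμ0
  have hψP : Integrable (fun x => ψ x * P x) μ0 := by
    refine Integrable.bdd_mul (c := C) hPint (hψc.aestronglyMeasurable) (ae_of_all _ fun x => ?_)
    simpa using hC x
  have hψ2P : Integrable (fun x => ψ x ^ 2 * P x) μ0 := by
    refine Integrable.bdd_mul (c := C ^ 2) hPint ((hψc.pow 2).aestronglyMeasurable) (ae_of_all _ fun x => ?_)
    rw [Real.norm_eq_abs, abs_pow]
    exact pow_le_pow_left₀ (abs_nonneg _) (hC x) 2
  have int1 : Integrable (fun z : ℝ × ℝ => (ψ z.1 ^ 2 * P z.1) * P z.2) (μ0.prod μ0) :=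
    hψ2P.mul_prod hPint
  have int2 : Integrable (fun z : ℝ × ℝ => P z.1 * (ψ z.2 ^ 2 * P z.2)) (μ0.prod μ0) :=
    hPint.mul_prod hψ2P
  have int3 : Integrable (fun z : ℝ × ℝ => (ψ z.1 * P z.1) * (ψ z.2 * P z.2)) (μ0.prod μ0) :=
    hψP.mul_prod hψP
  have int12 : Integrable (fun z : ℝ × ℝ =>
      (ψ z.1 ^ 2 * P z.1) * P z.2 + P z.1 * (ψ z.2 ^ 2 * P z.2)) (μ0.prod μ0) := int1.add int2
  have ecg : ∫ z, (ψ z.1 - ψ z.2) ^ 2 * (P z.1 * P z.2) ∂(μ0.prod μ0) =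
      ∫ z : ℝ × ℝ, (((ψ z.1 ^ 2 * P z.1) * P z.2 + P z.1 * (ψ z.2 ^ 2 * P z.2))
        - 2 * ((ψ z.1 * P z.1) * (ψ z.2 * P z.2))) ∂(μ0.prod μ0) := by
    refine integral_congr_ae (Filter.Eventually.of_forall fun z => ?_)
    ring
  rw [ecg, integral_sub int12 (int3.const_mul 2), integral_add int1 int2,
    MeasureTheory.integral_const_mul,
    integral_prod_mul (fun x => ψ x ^ 2 * P x) P,
    integral_prod_mul P (fun x => ψ x ^ 2 * P x),
    integral_prod_mul (fun x => ψ x * P x) (fun x => ψ x * P x)]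
  rw [hPmass]
  ring



section MB
variable {P ψ : ℝ → ℝ} {θ δ : ℝ}

lemma main_bound (hθ : 0 < θ) (hδ0 : 0 < δ)
    (hPmeas : Measurable P) (hPpos : ∀ x ∈ Ioi (0:ℝ), 0 ≤ P x)
    (hPint : IntegrableOn P (Ioi 0))
    (hPδint : IntegrableOn (fun x => x ^ δ * P x) (Ioi 0))
    (hkey : ∀ r ∈ Ioi (0:ℝ),
      (∫ t in Ioo (0:ℝ) r, P t) * (∫ s in Ioi r, s ^ δ * P s) -
        (∫ s in Ioi r, P s) * (∫ t in Ioo (0:ℝ) r, t ^ δ * P t) = (θ ^ δ / δ) * (r * P r))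
    (hψ : ContDiff ℝ (⊤ : ℕ∞) ψ)
    (hrhs : IntegrableOn (fun x => x ^ (2 - δ) * (deriv ψ x) ^ 2 * P x) (Ioi 0)) :
    ∫ z, (ψ z.1 - ψ z.2) ^ 2 * (P z.1 * P z.2)
        ∂((volume.restrict (Ioi (0:ℝ))).prod (volume.restrict (Ioi (0:ℝ)))) ≤
      2 * ((θ ^ δ / δ ^ 2) * ∫ x in Ioi (0:ℝ), x ^ (2 - δ) * (deriv ψ x) ^ 2 * P x) := by
  set μ0 := volume.restrict (Ioi (0:ℝ)) with hμ0
  set π := μ0.prod μ0 with hπ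
  have hψc : Continuous ψ := hψ.continuous
  have hψ'c : Continuous (deriv ψ) := hψ.continuous_deriv (by simp)
  set g : ℝ → ℝ := fun r => (deriv ψ r) ^ 2 * r ^ (1 - δ) with hg
  set c : ℝ × ℝ → ℝ := fun z => P z.1 * P z.2 * ((z.1 ^ δ - z.2 ^ δ) / δ) with hc
  set S : Set ((ℝ × ℝ) × ℝ) := {p | p.1.2 < p.2 ∧ p.2 ≤ p.1.1} with hS
  have hSm : MeasurableSet S := by
    apply MeasurableSet.inter
    · exact measurableSet_lt (measurable_fst.snd) measurable_snd
    · exact measurableSet_le measurable_snd (measurable_fst.fst)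
  set q : (ℝ × ℝ) × ℝ → ℝ≥0∞ := fun p =>
    ENNReal.ofReal (c p.1) * S.indicator (fun _ => (1:ℝ≥0∞)) p * ENNReal.ofReal (g p.2)
    with hq
  have hgm : Measurable g := by fun_prop
  have hcm : Measurable c := by
    have h1 : Measurable (fun z : ℝ × ℝ => z.1 ^ δ) := by fun_prop
    have h2 : Measurable (fun z : ℝ × ℝ => z.2 ^ δ) := by fun_prop
    exact ((hPmeas.comp measurable_fst).mul (hPmeas.comp measurable_snd)).mul
      ((h1.sub h2).div_const δ)
  have hqm : Measurable q := by
    apply Measurable.mul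
    apply Measurable.mul
    · exact (ENNReal.measurable_ofReal.comp (hcm.comp measurable_fst))
    · exact (measurable_const.indicator hSm)
    · exact (ENNReal.measurable_ofReal.comp (hgm.comp measurable_snd))
  set Qf : ℝ × ℝ → ℝ≥0∞ := fun z => ∫⁻ r, q (z, r) ∂μ0 with hQf
  have hqum : Measurable (Function.uncurry fun z r => q (z, r)) := by
    exact hqm
  have hQfm : Measurable Qf := hqum.lintegral_prod_right
  set D : ℝ × ℝ → ℝ := fun z => (ψ z.1 - ψ z.2) ^ 2 * (P z.1 * P z.2) with hD
  have hDm : AEStronglyMeasurable D π := by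
    have : Measurable D := by
      have := hψc.measurable
      have := hPmeas
      fun_prop
    exact this.aestronglyMeasurable
  have hπres : π = (volume.prod volume).restrict ((Ioi (0:ℝ)) ×ˢ (Ioi (0:ℝ))) :=
    Measure.prod_restrict _ _
  have hmem : ∀ᵐ z ∂π, z ∈ (Ioi (0:ℝ)) ×ˢ (Ioi (0:ℝ)) := by
    rw [hπres]
    exact ae_restrict_mem (measurableSet_Ioi.prod measurableSet_Ioi)
  have hDnn : 0 ≤ᵐ[π] D := by
    filter_upwards [hmem] with z hz
    exact mul_nonneg (sq_nonneg _) (mul_nonneg (hPpos _ hz.1) (hPpos _ hz.2))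
  -- half bound
  have hgnnIoc : ∀ {t s : ℝ}, 0 < t → ∀ r ∈ Ioc t s, 0 ≤ g r := by
    intro t s ht r hr
    exact mul_nonneg (sq_nonneg _) (Real.rpow_nonneg (le_of_lt (lt_trans ht hr.1)) _)
  have hJint : ∀ t s : ℝ, 0 < t → IntegrableOn g (Ioc t s) := by
    intro t s ht
    refine (((hψ'c.continuousOn.pow 2).mul (fun r hr => ?_)).integrableOn_Icc).mono_set
      Ioc_subset_Icc_self
    exact (Real.continuousAt_rpow_const r _
      (Or.inl (lt_of_lt_of_le ht hr.1).ne')).continuousWithinAt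
  have hhalf : ∀ s t : ℝ, 0 < t → t ≤ s → ENNReal.ofReal (D (s, t)) ≤ Qf (s, t) := by
    intro s t ht hts
    have hb := ftc_cs_bound hψ hδ0 ht hts
    have hcnn : 0 ≤ c (s, t) :=
      mul_nonneg (mul_nonneg (hPpos s (lt_of_lt_of_le ht hts)) (hPpos t ht))
        (div_nonneg (sub_nonneg.mpr (Real.rpow_le_rpow ht.le hts hδ0.le)) hδ0.le)
    have hJnn : 0 ≤ ∫ r in Ioc t s, g r :=
      setIntegral_nonneg measurableSet_Ioc (hgnnIoc ht)
    have hD_le : D (s, t) ≤ c (s, t) * ∫ r in Ioc t s, g r := by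
      have hPnn : 0 ≤ P s * P t := mul_nonneg (hPpos s (lt_of_lt_of_le ht hts)) (hPpos t ht)
      have h2 := mul_le_mul_of_nonneg_left hb hPnn
      calc D (s, t) = (P s * P t) * (ψ s - ψ t) ^ 2 := by simp only [hD]; ring
      _ ≤ (P s * P t) * (((s ^ δ - t ^ δ) / δ) * ∫ r in Ioc t s, g r) := h2
      _ = c (s, t) * ∫ r in Ioc t s, g r := by simp only [hc]; ring
    have hQval : Qf (s, t) = ENNReal.ofReal (c (s, t)) * ENNReal.ofReal (∫ r in Ioc t s, g r) := by
      have hIoc : Ioc t s ⊆ Ioi (0:ℝ) := fun x hx => lt_trans ht hx.1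
      have e1 : ∀ r : ℝ, q ((s, t), r) =
          (Ioc t s).indicator (fun r' => ENNReal.ofReal (c (s, t)) * ENNReal.ofReal (g r')) r := by
        intro r
        by_cases hmemr : r ∈ Ioc t s
        · have hmS : ((s, t), r) ∈ S := ⟨hmemr.1, hmemr.2⟩
          rw [indicator_of_mem hmemr]
          simp only [hq, indicator_of_mem hmS, mul_one]
        · have hmS : ((s, t), r) ∉ S := fun hm => hmemr ⟨hm.1, hm.2⟩
          rw [indicator_of_notMem hmemr]
          simp only [hq, indicator_of_notMem hmS, mul_zero, zero_mul]
      calc Qf (s, t) = ∫⁻ r, (Ioc t s).indicator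
            (fun r' => ENNReal.ofReal (c (s, t)) * ENNReal.ofReal (g r')) r ∂μ0 :=
          lintegral_congr e1
      _ = ∫⁻ r in Ioc t s, ENNReal.ofReal (c (s, t)) * ENNReal.ofReal (g r) ∂μ0 :=
          lintegral_indicator measurableSet_Ioc _
      _ = ∫⁻ r in Ioc t s, ENNReal.ofReal (c (s, t)) * ENNReal.ofReal (g r) ∂volume := by
          rw [hμ0, Measure.restrict_restrict measurableSet_Ioc, inter_eq_left.mpr hIoc]
      _ = ENNReal.ofReal (c (s, t)) * ∫⁻ r in Ioc t s, ENNReal.ofReal (g r) ∂volume :=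
          lintegral_const_mul' _ _ ENNReal.ofReal_ne_top
      _ = ENNReal.ofReal (c (s, t)) * ENNReal.ofReal (∫ r in Ioc t s, g r) := by
          rw [ofReal_integral_eq_lintegral_ofReal (hJint t s ht) ?_]
          filter_upwards [ae_restrict_mem measurableSet_Ioc] with r hr
          exact hgnnIoc ht r hr
    calc ENNReal.ofReal (D (s, t)) ≤ ENNReal.ofReal (c (s, t) * ∫ r in Ioc t s, g r) :=
        ENNReal.ofReal_le_ofReal hD_le
    _ = ENNReal.ofReal (c (s, t)) * ENNReal.ofReal (∫ r in Ioc t s, g r) :=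
        ENNReal.ofReal_mul hcnn
    _ = Qf (s, t) := hQval.symm
  have hdom : ∀ᵐ z ∂π, ENNReal.ofReal (D z) ≤ Qf z + Qf z.swap := by
    filter_upwards [hmem] with z hz
    rcases le_or_gt z.2 z.1 with hle | hlt
    · have := hhalf z.1 z.2 hz.2 hle
      calc ENNReal.ofReal (D z) = ENNReal.ofReal (D (z.1, z.2)) := rfl
      _ ≤ Qf (z.1, z.2) := this
      _ ≤ Qf z + Qf z.swap := le_self_add
    · have hsym : D z = D (z.2, z.1) := by simp only [hD]; ring
      have := hhalf z.2 z.1 hz.1 hlt.le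
      calc ENNReal.ofReal (D z) = ENNReal.ofReal (D (z.2, z.1)) := by rw [hsym]
      _ ≤ Qf (z.2, z.1) := this
      _ ≤ Qf z + Qf z.swap := le_add_self
  -- main chain
  have step1 : ∫ z, D z ∂π = (∫⁻ z, ENNReal.ofReal (D z) ∂π).toReal :=
    integral_eq_lintegral_of_nonneg_ae hDnn hDm
  have step2 : ∫⁻ z, ENNReal.ofReal (D z) ∂π ≤ ∫⁻ z, (Qf z + Qf z.swap) ∂π :=
    lintegral_mono_ae hdom
  have step3 : ∫⁻ z, (Qf z + Qf z.swap) ∂π = 2 * ∫⁻ z, Qf z ∂π := by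
    rw [lintegral_add_left hQfm]
    have : ∫⁻ z, Qf z.swap ∂π = ∫⁻ z, Qf z ∂π := lintegral_prod_swap Qf
    rw [this, two_mul]
  have step4 : ∫⁻ z, Qf z ∂π = ∫⁻ r, (∫⁻ z, q (z, r) ∂π) ∂μ0 := by
    have := lintegral_lintegral_swap (μ := π) (ν := μ0) (f := fun z r => q (z, r))
      hqum.aemeasurable
    exact this
  have step5 : ∀ᵐ r ∂μ0, (∫⁻ z, q (z, r) ∂π) =
      ENNReal.ofReal ((θ ^ δ / δ ^ 2) * (r * P r)) * ENNReal.ofReal (g r) := by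
    rw [hμ0]
    filter_upwards [ae_restrict_mem measurableSet_Ioi] with r (hr : 0 < r)
    have hFrnn : 0 ≤ (∫ t in Ioo (0:ℝ) r, P t) :=
      setIntegral_nonneg measurableSet_Ioo (fun t ht => hPpos t ht.1)
    have hBle : (∫ t in Ioo (0:ℝ) r, t ^ δ * P t) ≤ r ^ δ * (∫ t in Ioo (0:ℝ) r, P t) := by
      have h1 : IntegrableOn (fun t => t ^ δ * P t) (Ioo 0 r) :=
        hPδint.mono_set (Ioo_subset_Ioi_self)
      have h2 : IntegrableOn (fun t => r ^ δ * P t) (Ioo 0 r) :=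
        (hPint.mono_set (Ioo_subset_Ioi_self)).const_mul _
      have h3 := setIntegral_mono_on h1 h2 measurableSet_Ioo (fun t ht =>
        mul_le_mul_of_nonneg_right
          (Real.rpow_le_rpow ht.1.le ht.2.le hδ0.le) (hPpos t ht.1))
      rwa [MeasureTheory.integral_const_mul] at h3
    have hinner : ∀ s : ℝ, (∫⁻ t, q ((s, t), r) ∂μ0) =
        (Ici r).indicator (fun s' =>
          ENNReal.ofReal ((P s' / δ) * (s' ^ δ * (∫ t in Ioo (0:ℝ) r, P t) - (∫ t in Ioo (0:ℝ) r, t ^ δ * P t))) * ENNReal.ofReal (g r)) s := by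
      intro s
      by_cases hrs : r ≤ s
      · rw [indicator_of_mem (mem_Ici.mpr hrs)]
        have hs0 : 0 < s := lt_of_lt_of_le hr hrs
        have hcint : IntegrableOn (fun t => c (s, t)) (Ioo 0 r) := by
          have heq : (fun t => c (s, t)) =
              fun t => (P s / δ) * (s ^ δ * P t - t ^ δ * P t) := by
            funext t; simp only [hc]; ring
          rw [heq]
          exact (((hPint.mono_set Ioo_subset_Ioi_self).const_mul (s ^ δ)).sub
            (hPδint.mono_set Ioo_subset_Ioi_self)).const_mul _
        have hcnn2 : ∀ t ∈ Ioo (0:ℝ) r, 0 ≤ c (s, t) := by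
          intro t ht
          refine mul_nonneg (mul_nonneg (hPpos s hs0) (hPpos t ht.1)) ?_
          refine div_nonneg (sub_nonneg.mpr ?_) hδ0.le
          exact Real.rpow_le_rpow ht.1.le (le_trans ht.2.le hrs) hδ0.le
        have hreal : ∫ t in Ioo (0:ℝ) r, c (s, t) =
            (P s / δ) * (s ^ δ * (∫ t in Ioo (0:ℝ) r, P t) - (∫ t in Ioo (0:ℝ) r, t ^ δ * P t)) := by
          have heq : ∀ t ∈ Ioo (0:ℝ) r, c (s, t) =
              (P s / δ) * (s ^ δ * P t - t ^ δ * P t) := by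
            intro t ht; simp only [hc]; ring
          rw [setIntegral_congr_fun measurableSet_Ioo heq, MeasureTheory.integral_const_mul,
            integral_sub ((hPint.mono_set Ioo_subset_Ioi_self).const_mul (s ^ δ))
              (hPδint.mono_set Ioo_subset_Ioi_self),
            MeasureTheory.integral_const_mul]
        calc (∫⁻ t, q ((s, t), r) ∂μ0)
            = ∫⁻ t, (Iio r).indicator
              (fun t' => ENNReal.ofReal (c (s, t')) * ENNReal.ofReal (g r)) t ∂μ0 := by
              refine lintegral_congr fun t => ?_
              by_cases htr : t < r
              · have hmS : ((s, t), r) ∈ S := ⟨htr, hrs⟩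
                rw [indicator_of_mem (mem_Iio.mpr htr)]
                simp only [hq, indicator_of_mem hmS, mul_one]
              · have hmS : ((s, t), r) ∉ S := fun hm => htr hm.1
                rw [indicator_of_notMem (fun hm => htr (mem_Iio.mp hm))]
                simp only [hq, indicator_of_notMem hmS, mul_zero, zero_mul]
        _ = ∫⁻ t in Iio r, ENNReal.ofReal (c (s, t)) * ENNReal.ofReal (g r) ∂μ0 :=
            lintegral_indicator measurableSet_Iio _
        _ = ∫⁻ t in Ioo 0 r, ENNReal.ofReal (c (s, t)) * ENNReal.ofReal (g r) ∂volume := by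
            rw [hμ0, Measure.restrict_restrict measurableSet_Iio, Iio_inter_Ioi]
        _ = (∫⁻ t in Ioo 0 r, ENNReal.ofReal (c (s, t)) ∂volume) * ENNReal.ofReal (g r) :=
            lintegral_mul_const' _ _ ENNReal.ofReal_ne_top
        _ = ENNReal.ofReal ((P s / δ) * (s ^ δ * (∫ t in Ioo (0:ℝ) r, P t) - (∫ t in Ioo (0:ℝ) r, t ^ δ * P t))) * ENNReal.ofReal (g r) := by
            rw [← ofReal_integral_eq_lintegral_ofReal hcint ?_, hreal]
            filter_upwards [ae_restrict_mem measurableSet_Ioo] with t ht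
            exact hcnn2 t ht
      · rw [indicator_of_notMem (fun hm => hrs (mem_Ici.mp hm))]
        have hz : ∀ t, q ((s, t), r) = 0 := by
          intro t
          have hmS : ((s, t), r) ∉ S := fun hm => hrs hm.2
          simp only [hq, indicator_of_notMem hmS, mul_zero, zero_mul]
        simp [hz]
    -- outer integral over s
    have hmeas_zr : Measurable (fun z : ℝ × ℝ => q (z, r)) :=
      hqm.comp (measurable_id.prodMk measurable_const)
    rw [hπ, lintegral_prod _ hmeas_zr.aemeasurable]
    rw [lintegral_congr hinner]
    have hIci : Ici r ∩ Ioi (0:ℝ) = Ici r :=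
      inter_eq_left.mpr (fun x hx => lt_of_lt_of_le hr hx)
    have hint : IntegrableOn (fun s => (P s / δ) * (s ^ δ * (∫ t in Ioo (0:ℝ) r, P t) - (∫ t in Ioo (0:ℝ) r, t ^ δ * P t))) (Ioi r) := by
      have heq : (fun s => (P s / δ) * (s ^ δ * (∫ t in Ioo (0:ℝ) r, P t) - (∫ t in Ioo (0:ℝ) r, t ^ δ * P t))) =
          fun s => ((∫ t in Ioo (0:ℝ) r, P t) / δ) * (s ^ δ * P s) - ((∫ t in Ioo (0:ℝ) r, t ^ δ * P t) / δ) * P s := by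
        funext s; ring
      rw [heq]
      exact ((hPδint.mono_set (Ioi_subset_Ioi hr.le)).const_mul _).sub
        ((hPint.mono_set (Ioi_subset_Ioi hr.le)).const_mul _)
    have hnn : 0 ≤ᵐ[volume.restrict (Ioi r)] fun s => (P s / δ) * (s ^ δ * (∫ t in Ioo (0:ℝ) r, P t) - (∫ t in Ioo (0:ℝ) r, t ^ δ * P t)) := by
      filter_upwards [ae_restrict_mem measurableSet_Ioi] with s (hs : r < s)
      have h1 : (∫ t in Ioo (0:ℝ) r, t ^ δ * P t) ≤ s ^ δ * (∫ t in Ioo (0:ℝ) r, P t) := hBle.trans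
        (mul_le_mul_of_nonneg_right (Real.rpow_le_rpow hr.le hs.le hδ0.le) hFrnn)
      exact mul_nonneg (div_nonneg (hPpos s (hr.trans hs)) hδ0.le) (sub_nonneg.mpr h1)
    have hval : ∫ s in Ioi r, (P s / δ) * (s ^ δ * (∫ t in Ioo (0:ℝ) r, P t) - (∫ t in Ioo (0:ℝ) r, t ^ δ * P t)) =
        (θ ^ δ / δ ^ 2) * (r * P r) := by
      have heq : ∀ s ∈ Ioi r, (P s / δ) * (s ^ δ * (∫ t in Ioo (0:ℝ) r, P t) - (∫ t in Ioo (0:ℝ) r, t ^ δ * P t)) =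
          ((∫ t in Ioo (0:ℝ) r, P t) / δ) * (s ^ δ * P s) - ((∫ t in Ioo (0:ℝ) r, t ^ δ * P t) / δ) * P s := by
        intro s _; ring
      have i1 : IntegrableOn (fun s => s ^ δ * P s) (Ioi r) :=
        hPδint.mono_set (Ioi_subset_Ioi hr.le)
      have i2 : IntegrableOn P (Ioi r) := hPint.mono_set (Ioi_subset_Ioi hr.le)
      rw [setIntegral_congr_fun measurableSet_Ioi heq,
        integral_sub (i1.const_mul ((∫ t in Ioo (0:ℝ) r, P t) / δ))
          (i2.const_mul ((∫ t in Ioo (0:ℝ) r, t ^ δ * P t) / δ)),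
        MeasureTheory.integral_const_mul ((∫ t in Ioo (0:ℝ) r, P t) / δ)
          (fun s => s ^ δ * P s),
        MeasureTheory.integral_const_mul ((∫ t in Ioo (0:ℝ) r, t ^ δ * P t) / δ) P]
      have hk := hkey r hr
      linear_combination hk / δ
    calc ∫⁻ s, (Ici r).indicator (fun s' =>
          ENNReal.ofReal ((P s' / δ) * (s' ^ δ * (∫ t in Ioo (0:ℝ) r, P t) - (∫ t in Ioo (0:ℝ) r, t ^ δ * P t))) * ENNReal.ofReal (g r)) s ∂μ0
        = ∫⁻ s in Ici r, ENNReal.ofReal ((P s / δ) * (s ^ δ * (∫ t in Ioo (0:ℝ) r, P t) - (∫ t in Ioo (0:ℝ) r, t ^ δ * P t))) *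
            ENNReal.ofReal (g r) ∂μ0 := lintegral_indicator measurableSet_Ici _
    _ = ∫⁻ s in Ioi r, ENNReal.ofReal ((P s / δ) * (s ^ δ * (∫ t in Ioo (0:ℝ) r, P t) - (∫ t in Ioo (0:ℝ) r, t ^ δ * P t))) *
            ENNReal.ofReal (g r) ∂volume := by
        rw [hμ0, Measure.restrict_restrict measurableSet_Ici, hIci,
          Measure.restrict_congr_set Ioi_ae_eq_Ici]
    _ = (∫⁻ s in Ioi r, ENNReal.ofReal ((P s / δ) * (s ^ δ * (∫ t in Ioo (0:ℝ) r, P t) - (∫ t in Ioo (0:ℝ) r, t ^ δ * P t))) ∂volume) *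
            ENNReal.ofReal (g r) := lintegral_mul_const' _ _ ENNReal.ofReal_ne_top
    _ = ENNReal.ofReal ((θ ^ δ / δ ^ 2) * (r * P r)) * ENNReal.ofReal (g r) := by
        rw [← ofReal_integral_eq_lintegral_ofReal hint hnn, hval]
  have hC' : (0:ℝ) ≤ θ ^ δ / δ ^ 2 := div_nonneg (Real.rpow_pos_of_pos hθ δ).le (sq_nonneg δ)
  have hRnnae : 0 ≤ᵐ[μ0] fun x => x ^ (2 - δ) * (deriv ψ x) ^ 2 * P x := by
    rw [hμ0]
    filter_upwards [ae_restrict_mem measurableSet_Ioi] with x (hx : 0 < x)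
    exact mul_nonneg (mul_nonneg (Real.rpow_nonneg hx.le _) (sq_nonneg _)) (hPpos x hx)
  set R := ∫ x in Ioi (0:ℝ), x ^ (2 - δ) * (deriv ψ x) ^ 2 * P x with hR
  have step6 : ∫⁻ r, ENNReal.ofReal ((θ ^ δ / δ ^ 2) * (r * P r)) * ENNReal.ofReal (g r) ∂μ0 =
      ENNReal.ofReal (θ ^ δ / δ ^ 2) * ENNReal.ofReal R := by
    have e1 : ∀ᵐ r ∂μ0, ENNReal.ofReal ((θ ^ δ / δ ^ 2) * (r * P r)) * ENNReal.ofReal (g r) =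
        ENNReal.ofReal (θ ^ δ / δ ^ 2) *
          ENNReal.ofReal (r ^ (2 - δ) * (deriv ψ r) ^ 2 * P r) := by
      rw [hμ0]
      filter_upwards [ae_restrict_mem measurableSet_Ioi] with rr (hrr : 0 < rr)
      rw [ENNReal.ofReal_mul hC', mul_assoc,
        ← ENNReal.ofReal_mul (mul_nonneg hrr.le (hPpos _ hrr))]
      congr 2
      rw [show (2:ℝ) - δ = 1 + (1 - δ) by ring, Real.rpow_add hrr, Real.rpow_one]
      simp only [hg]
      ring
    rw [lintegral_congr_ae e1, lintegral_const_mul' _ _ ENNReal.ofReal_ne_top,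
      ← ofReal_integral_eq_lintegral_ofReal hrhs hRnnae]
  have hRnn : 0 ≤ R := by
    rw [hR]
    exact setIntegral_nonneg measurableSet_Ioi (fun x hx =>
      mul_nonneg (mul_nonneg (Real.rpow_nonneg (le_of_lt hx) _) (sq_nonneg _)) (hPpos x hx))
  have hfinal : ∫⁻ z, ENNReal.ofReal (D z) ∂π ≤
      2 * (ENNReal.ofReal (θ ^ δ / δ ^ 2) * ENNReal.ofReal R) := by
    refine step2.trans (le_of_eq ?_)
    rw [step3, step4, lintegral_congr_ae step5, step6]
  have hne : (2 : ℝ≥0∞) * (ENNReal.ofReal (θ ^ δ / δ ^ 2) * ENNReal.ofReal R) ≠ ⊤ :=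
    ENNReal.mul_ne_top (by norm_num)
      (ENNReal.mul_ne_top ENNReal.ofReal_ne_top ENNReal.ofReal_ne_top)
  calc ∫ z, (ψ z.1 - ψ z.2) ^ 2 * (P z.1 * P z.2) ∂π
      = (∫⁻ z, ENNReal.ofReal (D z) ∂π).toReal := step1
  _ ≤ (2 * (ENNReal.ofReal (θ ^ δ / δ ^ 2) * ENNReal.ofReal R)).toReal :=
      ENNReal.toReal_mono hne hfinal
  _ = 2 * ((θ ^ δ / δ ^ 2) * R) := by
      rw [ENNReal.toReal_mul, ENNReal.toReal_mul, ENNReal.toReal_ofReal hC',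
        ENNReal.toReal_ofReal hRnn]
      norm_num
end MB

theorem genGamma_weighted_chernoff (θ κ δ : ℝ) (hθ : 0 < θ) (hκ : 0 < κ)
    (hδ0 : 0 < δ) (hδ2 : δ ≤ 2)
    (ψ : ℝ → ℝ) (hψ : ContDiff ℝ (⊤ : ℕ∞) ψ) (hb : ∃ C, ∀ x, |ψ x| ≤ C)
    (hrhs : IntegrableOn
      (fun x => x ^ (2 - δ) * (deriv ψ x) ^ 2 * genGammaDensity θ κ δ x) (Ioi 0)) :
    (∫ x in Ioi (0:ℝ), ψ x ^ 2 * genGammaDensity θ κ δ x) -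
      (∫ x in Ioi (0:ℝ), ψ x * genGammaDensity θ κ δ x) ^ 2 ≤
      (θ ^ δ / δ ^ 2) *
        ∫ x in Ioi (0:ℝ), x ^ (2 - δ) * (deriv ψ x) ^ 2 * genGammaDensity θ κ δ x := by
  obtain ⟨C, hC⟩ := hb
  have hPint := ggd_integrableOn hθ hκ hδ0
  have hPδint := ggd_xmul_int hθ hκ hδ0
  have hPpos : ∀ x ∈ Ioi (0:ℝ), 0 ≤ genGammaDensity θ κ δ x :=
    fun x hx => ggd_nonneg hθ hκ hδ0 hx
  have hkey : ∀ r ∈ Ioi (0:ℝ),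
      (∫ t in Ioo (0:ℝ) r, genGammaDensity θ κ δ t) *
          (∫ s in Ioi r, s ^ δ * genGammaDensity θ κ δ s) -
        (∫ s in Ioi r, genGammaDensity θ κ δ s) *
          (∫ t in Ioo (0:ℝ) r, t ^ δ * genGammaDensity θ κ δ t) =
        (θ ^ δ / δ) * (r * genGammaDensity θ κ δ r) :=
    fun r hr => ggd_key hθ hκ hδ0 hr
  have hvar := variance_double (ψ := ψ) hPint (ggd_mass hθ hκ hδ0) hψ.continuous hC
  have hmain := main_bound hθ hδ0 ggd_measurable hPpos hPint hPδint hkey hψ hrhs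
  linarith
end
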